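/- arXiv:2508.05939 — 9 statements merged into one kernel-verified Lean document; each statement's English description precedes it below -/
import Mathlib

section
/- Let X, Θ be finite sets, φ a fully supported probability vector on X, μ a fully supported probability vector on Θ, α ∈ (0,1), and u : X × Θ → ℝ. Suppose the joint probability P on X × Θ, with marginal P|_θ = μ and conditional kernel P(ξ|θ), maximizes U(P) = Σ_{ξ,θ} P(ξ,θ) u(ξ,θ) − α Σ_ξ P(ξ) log(P(ξ)/φ(ξ)) − Σ_{ξ,θ} P(ξ,θ) log(P(ξ|θ)/P(ξ)) over all such joints. Then for every θ with μ(θ) > 0 and every ξ with P(ξ|θ) > 0, the quantity Y(ξ,θ) = u(ξ,θ) − α log(P(ξ)/φ(ξ)) − log(P(ξ|θ)/P(ξ)) does not depend on ξ. -/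
open Finset Real

variable {X Θ : Type*} [Fintype X] [Fintype Θ]

/-- X-marginal of a joint distribution. -/
noncomputable def margX (P : X → Θ → ℝ) (ξ : X) : ℝ := ∑ θ, P ξ θ

/-- Conditional choice probability `P(ξ|θ) = P(ξ,θ)/μ(θ)`. -/
noncomputable def ccp (P : X → Θ → ℝ) (μ : Θ → ℝ) (ξ : X) (θ : Θ) : ℝ := P ξ θ / μ θ

/-- The state-characteristic rational inattention objective. -/
noncomputable def Uobj (α : ℝ) (u : X → Θ → ℝ) (φ : X → ℝ) (μ : Θ → ℝ)
    (P : X → Θ → ℝ) : ℝ :=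
  (∑ ξ, ∑ θ, P ξ θ * u ξ θ)
    - α * ∑ ξ, margX P ξ * Real.log (margX P ξ / φ ξ)
    - ∑ ξ, ∑ θ, P ξ θ * Real.log (ccp P μ ξ θ / margX P ξ)

/-- The integrand `Y(ξ,θ;P)`. -/
noncomputable def Yfun (α : ℝ) (u : X → Θ → ℝ) (φ : X → ℝ) (μ : Θ → ℝ)
    (P : X → Θ → ℝ) (ξ : X) (θ : Θ) : ℝ :=
  u ξ θ - α * Real.log (margX P ξ / φ ξ) - Real.log (ccp P μ ξ θ / margX P ξ)

/-! ### Auxiliary machinery -/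

lemma sum_two_diff {ι : Type*} [Fintype ι] [DecidableEq ι] (f g : ι → ℝ) (a b : ι)
    (hab : a ≠ b) (h : ∀ i, i ≠ a → i ≠ b → f i = g i) :
    ∑ i, f i = ∑ i, g i + ((f a - g a) + (f b - g b)) := by
  have hb : b ∈ (Finset.univ.erase a) := by
    simp [Finset.mem_erase, hab.symm]
  have key : ∀ (F : ι → ℝ), ∑ i, F i
      = ∑ i ∈ (Finset.univ.erase a).erase b, F i + F b + F a := by
    intro F
    rw [Finset.sum_erase_add _ _ hb, Finset.sum_erase_add _ _ (Finset.mem_univ a)]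
  rw [key f, key g]
  have hcong : ∑ i ∈ (Finset.univ.erase a).erase b, f i
      = ∑ i ∈ (Finset.univ.erase a).erase b, g i := by
    refine Finset.sum_congr rfl fun i hi => ?_
    simp only [Finset.mem_erase] at hi
    exact h i hi.2.1 hi.1
  rw [hcong]; ring

/-- Separable form of the objective (up to the constant `∑ μ log μ`). -/
noncomputable def Gfun (α : ℝ) (u : X → Θ → ℝ) (φ : X → ℝ) (Q : X → Θ → ℝ) : ℝ :=
  (∑ ξ, ∑ θ, Q ξ θ * u ξ θ)
    + (1 - α) * (∑ ξ, margX Q ξ * Real.log (margX Q ξ))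
    + α * (∑ ξ, margX Q ξ * Real.log (φ ξ))
    - ∑ ξ, ∑ θ, Q ξ θ * Real.log (Q ξ θ)

lemma Uobj_eq_G (α : ℝ) (u : X → Θ → ℝ) (φ : X → ℝ) (hφ0 : ∀ ξ, 0 < φ ξ)
    (μ : Θ → ℝ) (hμ0 : ∀ θ, 0 < μ θ)
    (Q : X → Θ → ℝ) (hQ0 : ∀ ξ θ, 0 ≤ Q ξ θ) (hQθ : ∀ θ, ∑ ξ, Q ξ θ = μ θ) :
    Uobj α u φ μ Q = Gfun α u φ Q + ∑ θ, μ θ * Real.log (μ θ) := by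
  classical
  have hmQ : ∀ ξ, 0 ≤ margX Q ξ := fun ξ => Finset.sum_nonneg fun θ _ => hQ0 ξ θ
  have hA : ∑ ξ, margX Q ξ * Real.log (margX Q ξ / φ ξ)
      = ∑ ξ, (margX Q ξ * Real.log (margX Q ξ) - margX Q ξ * Real.log (φ ξ)) := by
    refine Finset.sum_congr rfl fun ξ _ => ?_
    rcases eq_or_lt_of_le (hmQ ξ) with h | h
    · rw [← h]; simp
    · rw [Real.log_div (ne_of_gt h) (ne_of_gt (hφ0 ξ))]; ring
  have hB : ∀ ξ θ, Q ξ θ * Real.log (ccp Q μ ξ θ / margX Q ξ)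
      = Q ξ θ * Real.log (Q ξ θ) - Q ξ θ * Real.log (μ θ)
        - Q ξ θ * Real.log (margX Q ξ) := by
    intro ξ θ
    rcases eq_or_lt_of_le (hQ0 ξ θ) with h | h
    · rw [← h]; ring
    · have hm : 0 < margX Q ξ :=
        lt_of_lt_of_le h (Finset.single_le_sum (fun θ' _ => hQ0 ξ θ') (Finset.mem_univ θ))
      have hμθ := hμ0 θ
      rw [ccp, Real.log_div (by positivity) (ne_of_gt hm),
        Real.log_div (ne_of_gt h) (ne_of_gt hμθ)]
      ring
  have hC : ∑ ξ, ∑ θ, Q ξ θ * Real.log (μ θ) = ∑ θ, μ θ * Real.log (μ θ) := by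
    rw [Finset.sum_comm]
    refine Finset.sum_congr rfl fun θ _ => ?_
    rw [← Finset.sum_mul, hQθ θ]
  have hD : ∑ ξ, ∑ θ, Q ξ θ * Real.log (margX Q ξ)
      = ∑ ξ, margX Q ξ * Real.log (margX Q ξ) := by
    refine Finset.sum_congr rfl fun ξ _ => ?_
    rw [← Finset.sum_mul]
    rfl
  have hB' : ∑ ξ, ∑ θ, Q ξ θ * Real.log (ccp Q μ ξ θ / margX Q ξ)
      = (∑ ξ, ∑ θ, Q ξ θ * Real.log (Q ξ θ)) - (∑ θ, μ θ * Real.log (μ θ))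
        - (∑ ξ, margX Q ξ * Real.log (margX Q ξ)) := by
    calc ∑ ξ, ∑ θ, Q ξ θ * Real.log (ccp Q μ ξ θ / margX Q ξ)
        = ∑ ξ, ∑ θ, (Q ξ θ * Real.log (Q ξ θ) - Q ξ θ * Real.log (μ θ)
            - Q ξ θ * Real.log (margX Q ξ)) :=
          Finset.sum_congr rfl fun ξ _ => Finset.sum_congr rfl fun θ _ => hB ξ θ
      _ = _ := by
          simp only [Finset.sum_sub_distrib]
          rw [hC, hD]
  rw [Uobj, Gfun, hA, hB', Finset.sum_sub_distrib]
  ring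

lemma hasDerivAt_entL (c : ℝ) (hc : c ≠ 0) :
    HasDerivAt (fun t : ℝ => (c - t) * Real.log (c - t)) (-(Real.log c + 1)) 0 := by
  have h1 : HasDerivAt (fun t : ℝ => c - t) (-1) 0 := by
    simpa using (hasDerivAt_id (0:ℝ)).const_sub c
  have h2 : HasDerivAt (fun x : ℝ => x * Real.log x) (Real.log c + 1) ((fun t : ℝ => c - t) 0) := by
    simpa using Real.hasDerivAt_mul_log hc
  have := h2.comp 0 h1
  simpa [Function.comp_def] using this

lemma hasDerivAt_entR (c : ℝ) (hc : c ≠ 0) :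
    HasDerivAt (fun t : ℝ => (c + t) * Real.log (c + t)) (Real.log c + 1) 0 := by
  have h1 : HasDerivAt (fun t : ℝ => c + t) 1 0 := by
    simpa using (hasDerivAt_id (0:ℝ)).const_add c
  have h2 : HasDerivAt (fun x : ℝ => x * Real.log x) (Real.log c + 1) ((fun t : ℝ => c + t) 0) := by
    simpa using Real.hasDerivAt_mul_log hc
  have := h2.comp 0 h1
  simpa [Function.comp_def] using this

theorem gibbs_property
    (α : ℝ) (hα : 0 < α) (hα1 : α < 1)
    (u : X → Θ → ℝ)
    (φ : X → ℝ) (hφ0 : ∀ ξ, 0 < φ ξ) (hφ1 : ∑ ξ, φ ξ = 1)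
    (μ : Θ → ℝ) (hμ0 : ∀ θ, 0 < μ θ) (hμ1 : ∑ θ, μ θ = 1)
    (P : X → Θ → ℝ)
    (hP0 : ∀ ξ θ, 0 ≤ P ξ θ) (hPθ : ∀ θ, ∑ ξ, P ξ θ = μ θ)
    (hmax : ∀ Q : X → Θ → ℝ, (∀ ξ θ, 0 ≤ Q ξ θ) → (∀ θ, ∑ ξ, Q ξ θ = μ θ) →
      Uobj α u φ μ Q ≤ Uobj α u φ μ P) :
    ∀ θ, ∀ ξ₁ ξ₂, 0 < ccp P μ ξ₁ θ → 0 < ccp P μ ξ₂ θ →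
      Yfun α u φ μ P ξ₁ θ = Yfun α u φ μ P ξ₂ θ := by
  classical
  intro θ₀ ξ₁ ξ₂ h₁ h₂
  rcases eq_or_ne ξ₁ ξ₂ with rfl | hne
  · rfl
  have hμθ := hμ0 θ₀
  have hp₁ : 0 < P ξ₁ θ₀ := by
    have := mul_pos h₁ hμθ
    rwa [ccp, div_mul_cancel₀ _ (ne_of_gt hμθ)] at this
  have hp₂ : 0 < P ξ₂ θ₀ := by
    have := mul_pos h₂ hμθ
    rwa [ccp, div_mul_cancel₀ _ (ne_of_gt hμθ)] at this
  have hmle : ∀ ξ θ, P ξ θ ≤ margX P ξ := fun ξ θ =>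
    Finset.single_le_sum (fun θ' _ => hP0 ξ θ') (Finset.mem_univ θ)
  have hm₁ : 0 < margX P ξ₁ := lt_of_lt_of_le hp₁ (hmle ξ₁ θ₀)
  have hm₂ : 0 < margX P ξ₂ := lt_of_lt_of_le hp₂ (hmle ξ₂ θ₀)
  -- the perturbation family
  set Q : ℝ → X → Θ → ℝ := fun t ξ θ =>
    P ξ θ + (if ξ = ξ₂ ∧ θ = θ₀ then t else 0) - (if ξ = ξ₁ ∧ θ = θ₀ then t else 0)
    with hQdef
  have hQ₁ : ∀ t, Q t ξ₁ θ₀ = P ξ₁ θ₀ - t := by intro t; simp [hQdef, hne]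
  have hQ₂ : ∀ t, Q t ξ₂ θ₀ = P ξ₂ θ₀ + t := by intro t; simp [hQdef, hne.symm]
  have hQother : ∀ t ξ θ, ¬(ξ = ξ₁ ∧ θ = θ₀) → ¬(ξ = ξ₂ ∧ θ = θ₀) → Q t ξ θ = P ξ θ := by
    intro t ξ θ hx hy; simp [hQdef, hx, hy]
  have hmarg : ∀ t ξ, margX (Q t) ξ
      = margX P ξ + (if ξ = ξ₂ then t else 0) - (if ξ = ξ₁ then t else 0) := by
    intro t ξ
    simp only [margX, hQdef]
    rw [Finset.sum_sub_distrib, Finset.sum_add_distrib]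
    congr 1
    · congr 1
      by_cases h : ξ = ξ₂ <;> simp [h]
    · by_cases h : ξ = ξ₁ <;> simp [h]
  have hmarg₁ : ∀ t, margX (Q t) ξ₁ = margX P ξ₁ - t := by
    intro t; rw [hmarg]; simp [hne]
  have hmarg₂ : ∀ t, margX (Q t) ξ₂ = margX P ξ₂ + t := by
    intro t; rw [hmarg]; simp [hne.symm]
  have hmargo : ∀ t ξ, ξ ≠ ξ₁ → ξ ≠ ξ₂ → margX (Q t) ξ = margX P ξ := by
    intro t ξ hx hy; rw [hmarg]; simp [hx, hy]
  -- the explicit objective along the perturbation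
  set g : ℝ → ℝ := fun t =>
    t * (u ξ₂ θ₀ - u ξ₁ θ₀)
    + α * (t * (Real.log (φ ξ₂) - Real.log (φ ξ₁)))
    + (1 - α) * (((margX P ξ₁ - t) * Real.log (margX P ξ₁ - t)
          - margX P ξ₁ * Real.log (margX P ξ₁))
        + ((margX P ξ₂ + t) * Real.log (margX P ξ₂ + t)
          - margX P ξ₂ * Real.log (margX P ξ₂)))
    - (((P ξ₁ θ₀ - t) * Real.log (P ξ₁ θ₀ - t) - P ξ₁ θ₀ * Real.log (P ξ₁ θ₀))
        + ((P ξ₂ θ₀ + t) * Real.log (P ξ₂ θ₀ + t) - P ξ₂ θ₀ * Real.log (P ξ₂ θ₀)))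
    with hgdef
  have hg0 : g 0 = 0 := by simp [hgdef]
  have hab : ((ξ₁, θ₀) : X × Θ) ≠ (ξ₂, θ₀) := by simp [hne]
  -- the four sum computations
  have key : ∀ t, Gfun α u φ (Q t) = Gfun α u φ P + g t := by
    intro t
    have hS1 : (∑ ξ, ∑ θ, Q t ξ θ * u ξ θ)
        = (∑ ξ, ∑ θ, P ξ θ * u ξ θ) + t * (u ξ₂ θ₀ - u ξ₁ θ₀) := by
      have e1 : (∑ ξ, ∑ θ, Q t ξ θ * u ξ θ)
          = ∑ i : X × Θ, Q t i.1 i.2 * u i.1 i.2 :=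
        (Fintype.sum_prod_type (fun i : X × Θ => Q t i.1 i.2 * u i.1 i.2)).symm
      have e2 : (∑ i : X × Θ, P i.1 i.2 * u i.1 i.2)
          = ∑ ξ, ∑ θ, P ξ θ * u ξ θ :=
        Fintype.sum_prod_type (fun i : X × Θ => P i.1 i.2 * u i.1 i.2)
      have h2 : (∑ i : X × Θ, Q t i.1 i.2 * u i.1 i.2)
          = (∑ i : X × Θ, P i.1 i.2 * u i.1 i.2)
            + ((Q t ξ₁ θ₀ * u ξ₁ θ₀ - P ξ₁ θ₀ * u ξ₁ θ₀)
              + (Q t ξ₂ θ₀ * u ξ₂ θ₀ - P ξ₂ θ₀ * u ξ₂ θ₀)) :=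
        sum_two_diff _ _ _ _ hab
          (fun i hi1 hi2 => congrArg (· * u i.1 i.2)
            (hQother t i.1 i.2 (by simpa [Prod.ext_iff] using hi1)
              (by simpa [Prod.ext_iff] using hi2)))
      rw [e1, h2, e2, hQ₁, hQ₂]
      ring
    have hS3 : (∑ ξ, ∑ θ, Q t ξ θ * Real.log (Q t ξ θ))
        = (∑ ξ, ∑ θ, P ξ θ * Real.log (P ξ θ))
          + (((P ξ₁ θ₀ - t) * Real.log (P ξ₁ θ₀ - t) - P ξ₁ θ₀ * Real.log (P ξ₁ θ₀))
            + ((P ξ₂ θ₀ + t) * Real.log (P ξ₂ θ₀ + t) - P ξ₂ θ₀ * Real.log (P ξ₂ θ₀))) := by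
      have e1 : (∑ ξ, ∑ θ, Q t ξ θ * Real.log (Q t ξ θ))
          = ∑ i : X × Θ, Q t i.1 i.2 * Real.log (Q t i.1 i.2) :=
        (Fintype.sum_prod_type (fun i : X × Θ => Q t i.1 i.2 * Real.log (Q t i.1 i.2))).symm
      have e2 : (∑ i : X × Θ, P i.1 i.2 * Real.log (P i.1 i.2))
          = ∑ ξ, ∑ θ, P ξ θ * Real.log (P ξ θ) :=
        Fintype.sum_prod_type (fun i : X × Θ => P i.1 i.2 * Real.log (P i.1 i.2))
      have h2 : (∑ i : X × Θ, Q t i.1 i.2 * Real.log (Q t i.1 i.2))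
          = (∑ i : X × Θ, P i.1 i.2 * Real.log (P i.1 i.2))
            + ((Q t ξ₁ θ₀ * Real.log (Q t ξ₁ θ₀) - P ξ₁ θ₀ * Real.log (P ξ₁ θ₀))
              + (Q t ξ₂ θ₀ * Real.log (Q t ξ₂ θ₀) - P ξ₂ θ₀ * Real.log (P ξ₂ θ₀))) :=
        sum_two_diff _ _ _ _ hab
          (fun i hi1 hi2 => congrArg (fun x => x * Real.log x)
            (hQother t i.1 i.2 (by simpa [Prod.ext_iff] using hi1)
              (by simpa [Prod.ext_iff] using hi2)))
      rw [e1, h2, e2, hQ₁, hQ₂]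
    have hS2 : (∑ ξ, margX (Q t) ξ * Real.log (margX (Q t) ξ))
        = (∑ ξ, margX P ξ * Real.log (margX P ξ))
          + (((margX P ξ₁ - t) * Real.log (margX P ξ₁ - t)
              - margX P ξ₁ * Real.log (margX P ξ₁))
            + ((margX P ξ₂ + t) * Real.log (margX P ξ₂ + t)
              - margX P ξ₂ * Real.log (margX P ξ₂))) := by
      have h2 : (∑ ξ, margX (Q t) ξ * Real.log (margX (Q t) ξ))
          = (∑ ξ, margX P ξ * Real.log (margX P ξ))
            + ((margX (Q t) ξ₁ * Real.log (margX (Q t) ξ₁)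
                - margX P ξ₁ * Real.log (margX P ξ₁))
              + (margX (Q t) ξ₂ * Real.log (margX (Q t) ξ₂)
                - margX P ξ₂ * Real.log (margX P ξ₂))) :=
        sum_two_diff _ _ _ _ hne
          (fun ξ hx hy => congrArg (fun x => x * Real.log x) (hmargo t ξ hx hy))
      rw [h2, hmarg₁, hmarg₂]
    have hSφ : (∑ ξ, margX (Q t) ξ * Real.log (φ ξ))
        = (∑ ξ, margX P ξ * Real.log (φ ξ))
          + (t * (Real.log (φ ξ₂) - Real.log (φ ξ₁))) := by
      have h2 : (∑ ξ, margX (Q t) ξ * Real.log (φ ξ))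
          = (∑ ξ, margX P ξ * Real.log (φ ξ))
            + ((margX (Q t) ξ₁ * Real.log (φ ξ₁) - margX P ξ₁ * Real.log (φ ξ₁))
              + (margX (Q t) ξ₂ * Real.log (φ ξ₂) - margX P ξ₂ * Real.log (φ ξ₂))) :=
        sum_two_diff _ _ _ _ hne
          (fun ξ hx hy => congrArg (· * Real.log (φ ξ)) (hmargo t ξ hx hy))
      rw [h2, hmarg₁, hmarg₂]
      ring
    rw [Gfun, Gfun, hS1, hS2, hS3, hSφ]
    simp only [hgdef]
    ring
  -- local maximality of g at 0
  have hδpos : 0 < min (P ξ₁ θ₀) (P ξ₂ θ₀) := lt_min hp₁ hp₂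
  have hloc : IsLocalMax g 0 := by
    have hmem : Metric.ball (0:ℝ) (min (P ξ₁ θ₀) (P ξ₂ θ₀)) ∈ nhds (0:ℝ) :=
      Metric.ball_mem_nhds _ hδpos
    refine Filter.eventually_of_mem hmem fun t ht => ?_
    have habs : |t| < min (P ξ₁ θ₀) (P ξ₂ θ₀) := by
      simpa [Real.dist_eq] using ht
    have ht1 : t ≤ P ξ₁ θ₀ :=
      le_of_lt (lt_of_le_of_lt (le_abs_self t) (lt_of_lt_of_le habs (min_le_left _ _)))
    have ht2 : -t ≤ P ξ₂ θ₀ := by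
      have h1 : |t| < P ξ₂ θ₀ := lt_of_lt_of_le habs (min_le_right _ _)
      have h2 : -t ≤ |t| := neg_le_abs t
      linarith
    have hQ0' : ∀ ξ θ, 0 ≤ Q t ξ θ := by
      intro ξ θ
      by_cases hx : ξ = ξ₁ ∧ θ = θ₀
      · rw [hx.1, hx.2, hQ₁]; linarith
      · by_cases hy : ξ = ξ₂ ∧ θ = θ₀
        · rw [hy.1, hy.2, hQ₂]; linarith
        · rw [hQother t ξ θ hx hy]; exact hP0 ξ θ
    have hQθ' : ∀ θ, ∑ ξ, Q t ξ θ = μ θ := by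
      intro θ
      simp only [hQdef]
      rw [Finset.sum_sub_distrib, Finset.sum_add_distrib]
      have e1 : ∑ ξ, (if ξ = ξ₂ ∧ θ = θ₀ then t else 0) = if θ = θ₀ then t else 0 := by
        by_cases h : θ = θ₀ <;> simp [h]
      have e2 : ∑ ξ, (if ξ = ξ₁ ∧ θ = θ₀ then t else 0) = if θ = θ₀ then t else 0 := by
        by_cases h : θ = θ₀ <;> simp [h]
      rw [e1, e2, hPθ θ]; ring
    have hle := hmax (Q t) hQ0' hQθ'
    rw [Uobj_eq_G α u φ hφ0 μ hμ0 (Q t) hQ0' hQθ',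
      Uobj_eq_G α u φ hφ0 μ hμ0 P hP0 hPθ, key t] at hle
    rw [hg0]
    linarith
  -- the derivative of g at 0
  have hd : HasDerivAt g
      ((u ξ₂ θ₀ - u ξ₁ θ₀)
        + α * (Real.log (φ ξ₂) - Real.log (φ ξ₁))
        + (1 - α) * (-(Real.log (margX P ξ₁) + 1) + (Real.log (margX P ξ₂) + 1))
        - (-(Real.log (P ξ₁ θ₀) + 1) + (Real.log (P ξ₂ θ₀) + 1))) 0 := by
    have d1 : HasDerivAt (fun t : ℝ => t * (u ξ₂ θ₀ - u ξ₁ θ₀)) (u ξ₂ θ₀ - u ξ₁ θ₀) 0 := by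
      simpa using (hasDerivAt_id (0:ℝ)).mul_const (u ξ₂ θ₀ - u ξ₁ θ₀)
    have d2 : HasDerivAt (fun t : ℝ => α * (t * (Real.log (φ ξ₂) - Real.log (φ ξ₁))))
        (α * (Real.log (φ ξ₂) - Real.log (φ ξ₁))) 0 := by
      have := ((hasDerivAt_id (0:ℝ)).mul_const (Real.log (φ ξ₂) - Real.log (φ ξ₁))).const_mul α
      simpa using this
    have d3a := (hasDerivAt_entL (margX P ξ₁) (ne_of_gt hm₁)).sub_const
      (margX P ξ₁ * Real.log (margX P ξ₁))
    have d3b := (hasDerivAt_entR (margX P ξ₂) (ne_of_gt hm₂)).sub_const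
      (margX P ξ₂ * Real.log (margX P ξ₂))
    have d3 := (d3a.add d3b).const_mul (1 - α)
    have d4a := (hasDerivAt_entL (P ξ₁ θ₀) (ne_of_gt hp₁)).sub_const
      (P ξ₁ θ₀ * Real.log (P ξ₁ θ₀))
    have d4b := (hasDerivAt_entR (P ξ₂ θ₀) (ne_of_gt hp₂)).sub_const
      (P ξ₂ θ₀ * Real.log (P ξ₂ θ₀))
    have d4 := d4a.add d4b
    exact hgdef ▸ (((d1.add d2).add d3).sub d4)
  have hD0 := hloc.hasDerivAt_eq_zero hd
  -- identify the derivative with the difference of Y's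
  have hY : Yfun α u φ μ P ξ₂ θ₀ - Yfun α u φ μ P ξ₁ θ₀
      = (u ξ₂ θ₀ - u ξ₁ θ₀)
        + α * (Real.log (φ ξ₂) - Real.log (φ ξ₁))
        + (1 - α) * (-(Real.log (margX P ξ₁) + 1) + (Real.log (margX P ξ₂) + 1))
        - (-(Real.log (P ξ₁ θ₀) + 1) + (Real.log (P ξ₂ θ₀) + 1)) := by
    simp only [Yfun, ccp]
    rw [Real.log_div (ne_of_gt hm₁) (ne_of_gt (hφ0 ξ₁)),
      Real.log_div (ne_of_gt hm₂) (ne_of_gt (hφ0 ξ₂)),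
      Real.log_div (ne_of_gt (div_pos hp₁ hμθ)) (ne_of_gt hm₁),
      Real.log_div (ne_of_gt (div_pos hp₂ hμθ)) (ne_of_gt hm₂),
      Real.log_div (ne_of_gt hp₁) (ne_of_gt hμθ),
      Real.log_div (ne_of_gt hp₂) (ne_of_gt hμθ)]
    ring
  rw [hD0] at hY
  linarith
end

section
/- Let X, Θ be finite sets, φ, μ fully supported probability vectors on X and Θ, α ∈ (0,1), u : X × Θ → ℝ. If the joint P maximizes U(P) = E_P[u] − α D_KL(P|_ξ ∥ φ) − I_P(ξ,θ) subject to P|_θ = μ, then the conditional choice probabilities take the weighted multinomial logit form: P(ξ|θ) = φ(ξ)^α P(ξ)^{1−α} e^{u(ξ,θ)} / Z(θ), where Z(θ) = Σ_{ξ'} φ(ξ')^α P(ξ')^{1−α} e^{u(ξ',θ)}. -/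
open Finset Real

variable {X Θ : Type*} [Fintype X] [Fintype Θ]

section AuxLemmas

open Filter Topology

lemma hasDerivAt_E_shift (a : ℝ) (ha : a ≠ 0) (c : ℝ) :
    HasDerivAt (fun t => (a + c * t) * Real.log (a + c * t)) ((Real.log a + 1) * c) 0 := by
  have h1 : HasDerivAt (fun t : ℝ => a + c * t) c 0 := by
    simpa using ((hasDerivAt_id (0 : ℝ)).const_mul c).const_add a
  have h0 : a + c * (0 : ℝ) ≠ 0 := by simpa using ha
  have h2 := (Real.hasDerivAt_mul_log h0).comp 0 h1
  simpa [Function.comp_def] using h2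

lemma sum_sub_pair [DecidableEq X] (f g : X → ℝ) (ξ1 ξ2 : X) (h12 : ξ1 ≠ ξ2)
    (h : ∀ ξ, ξ ≠ ξ1 → ξ ≠ ξ2 → f ξ = g ξ) :
    ∑ ξ, f ξ = (∑ ξ, g ξ) + ((f ξ1 - g ξ1) + (f ξ2 - g ξ2)) := by
  have h1 : ∑ ξ, (f ξ - g ξ) = ∑ ξ ∈ ({ξ1, ξ2} : Finset X), (f ξ - g ξ) := by
    refine (Finset.sum_subset (Finset.subset_univ _) ?_).symm
    intro x _ hx
    simp only [Finset.mem_insert, Finset.mem_singleton, not_or] at hx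
    rw [h x hx.1 hx.2]; ring
  rw [Finset.sum_pair h12] at h1
  rw [Finset.sum_sub_distrib] at h1
  linarith

lemma sum_sub_single [DecidableEq Θ] (f g : Θ → ℝ) (θ0 : Θ)
    (h : ∀ θ, θ ≠ θ0 → f θ = g θ) :
    ∑ θ, f θ = (∑ θ, g θ) + (f θ0 - g θ0) := by
  have h1 : ∑ θ, (f θ - g θ) = ∑ θ ∈ ({θ0} : Finset Θ), (f θ - g θ) := by
    refine (Finset.sum_subset (Finset.subset_univ _) ?_).symm
    intro x _ hx
    simp only [Finset.mem_singleton] at hx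
    rw [h x hx]; ring
  rw [Finset.sum_singleton, Finset.sum_sub_distrib] at h1
  linarith

lemma margX_nonneg (P : X → Θ → ℝ) (hP0 : ∀ ξ θ, 0 ≤ P ξ θ) (ξ : X) :
    0 ≤ margX P ξ :=
  Finset.sum_nonneg fun θ _ => hP0 ξ θ

lemma le_margX (P : X → Θ → ℝ) (hP0 : ∀ ξ θ, 0 ≤ P ξ θ) (ξ : X) (θ : Θ) :
    P ξ θ ≤ margX P ξ :=
  Finset.single_le_sum (fun θ' _ => hP0 ξ θ') (Finset.mem_univ θ)

lemma Uobj_eq (α : ℝ) (u : X → Θ → ℝ) (φ : X → ℝ) (hφ0 : ∀ ξ, 0 < φ ξ)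
    (μ : Θ → ℝ) (hμ0 : ∀ θ, 0 < μ θ)
    (P : X → Θ → ℝ) (hP0 : ∀ ξ θ, 0 ≤ P ξ θ) (hPθ : ∀ θ, ∑ ξ, P ξ θ = μ θ) :
    Uobj α u φ μ P =
      (∑ ξ, ∑ θ, P ξ θ * u ξ θ)
      + (1 - α) * ∑ ξ, margX P ξ * Real.log (margX P ξ)
      + α * ∑ ξ, margX P ξ * Real.log (φ ξ)
      - (∑ ξ, ∑ θ, P ξ θ * Real.log (P ξ θ))
      + ∑ θ, μ θ * Real.log (μ θ) := by
  have e1 : ∑ ξ, margX P ξ * Real.log (margX P ξ / φ ξ)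
      = (∑ ξ, margX P ξ * Real.log (margX P ξ)) - ∑ ξ, margX P ξ * Real.log (φ ξ) := by
    rw [← Finset.sum_sub_distrib]
    refine Finset.sum_congr rfl fun ξ _ => ?_
    rcases (margX_nonneg P hP0 ξ).eq_or_lt with h | h
    · simp [← h]
    · rw [Real.log_div h.ne' (hφ0 ξ).ne']; ring
  have e2 : ∑ ξ, ∑ θ, P ξ θ * Real.log (ccp P μ ξ θ / margX P ξ)
      = (∑ ξ, ∑ θ, P ξ θ * Real.log (P ξ θ))
        - (∑ θ, μ θ * Real.log (μ θ))
        - ∑ ξ, margX P ξ * Real.log (margX P ξ) := by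
    have step : ∀ ξ θ, P ξ θ * Real.log (ccp P μ ξ θ / margX P ξ)
        = P ξ θ * Real.log (P ξ θ) - P ξ θ * Real.log (μ θ)
          - P ξ θ * Real.log (margX P ξ) := by
      intro ξ θ
      rcases (hP0 ξ θ).eq_or_lt with h | h
      · simp [← h]
      · have hm : 0 < margX P ξ := lt_of_lt_of_le h (le_margX P hP0 ξ θ)
        rw [ccp, Real.log_div (div_ne_zero h.ne' (hμ0 θ).ne') hm.ne',
          Real.log_div h.ne' (hμ0 θ).ne']
        ring
    calc ∑ ξ, ∑ θ, P ξ θ * Real.log (ccp P μ ξ θ / margX P ξ)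
        = ∑ ξ, ∑ θ, (P ξ θ * Real.log (P ξ θ) - P ξ θ * Real.log (μ θ)
            - P ξ θ * Real.log (margX P ξ)) := by
          exact Finset.sum_congr rfl fun ξ _ => Finset.sum_congr rfl fun θ _ => step ξ θ
      _ = (∑ ξ, ∑ θ, P ξ θ * Real.log (P ξ θ))
            - (∑ ξ, ∑ θ, P ξ θ * Real.log (μ θ))
            - ∑ ξ, ∑ θ, P ξ θ * Real.log (margX P ξ) := by
          simp [Finset.sum_sub_distrib]
      _ = (∑ ξ, ∑ θ, P ξ θ * Real.log (P ξ θ))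
            - (∑ θ, μ θ * Real.log (μ θ))
            - ∑ ξ, margX P ξ * Real.log (margX P ξ) := by
          congr 1
          · congr 1
            rw [Finset.sum_comm]
            refine Finset.sum_congr rfl fun θ _ => ?_
            rw [← Finset.sum_mul, hPθ]
          · refine Finset.sum_congr rfl fun ξ _ => ?_
            rw [← Finset.sum_mul, margX]
  rw [Uobj, e1, e2]; ring

noncomputable def pert [DecidableEq X] [DecidableEq Θ] (P : X → Θ → ℝ)
    (ξ1 ξ2 : X) (θ0 : Θ) (t : ℝ) : X → Θ → ℝ :=
  fun ξ θ => if θ = θ0 then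
    (if ξ = ξ1 then P ξ θ + t else if ξ = ξ2 then P ξ θ - t else P ξ θ)
  else P ξ θ

variable [DecidableEq X] [DecidableEq Θ] (P : X → Θ → ℝ) (ξ1 ξ2 : X) (θ0 : Θ) (t : ℝ)

lemma pert_apply_ne (ξ : X) (h1 : ξ ≠ ξ1) (h2 : ξ ≠ ξ2) (θ : Θ) :
    pert P ξ1 ξ2 θ0 t ξ θ = P ξ θ := by
  by_cases h : θ = θ0 <;> simp [pert, h, h1, h2]

lemma pert_apply_fst (θ : Θ) :
    pert P ξ1 ξ2 θ0 t ξ1 θ = P ξ1 θ + (if θ = θ0 then t else 0) := by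
  by_cases h : θ = θ0 <;> simp [pert, h]

lemma pert_apply_snd (h12 : ξ1 ≠ ξ2) (θ : Θ) :
    pert P ξ1 ξ2 θ0 t ξ2 θ = P ξ2 θ - (if θ = θ0 then t else 0) := by
  by_cases h : θ = θ0 <;> simp [pert, h, h12.symm]

lemma margX_pert_fst : margX (pert P ξ1 ξ2 θ0 t) ξ1 = margX P ξ1 + t := by
  simp only [margX, pert_apply_fst]
  rw [Finset.sum_add_distrib, Finset.sum_ite_eq' Finset.univ θ0 (fun _ => t)]
  simp

lemma margX_pert_snd (h12 : ξ1 ≠ ξ2) :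
    margX (pert P ξ1 ξ2 θ0 t) ξ2 = margX P ξ2 - t := by
  simp only [margX, pert_apply_snd P ξ1 ξ2 θ0 t h12]
  rw [Finset.sum_sub_distrib, Finset.sum_ite_eq' Finset.univ θ0 (fun _ => t)]
  simp

lemma margX_pert_ne (ξ : X) (h1 : ξ ≠ ξ1) (h2 : ξ ≠ ξ2) :
    margX (pert P ξ1 ξ2 θ0 t) ξ = margX P ξ := by
  simp only [margX, pert_apply_ne P ξ1 ξ2 θ0 t ξ h1 h2]

lemma sum_pert (h12 : ξ1 ≠ ξ2) (θ : Θ) :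
    ∑ ξ, pert P ξ1 ξ2 θ0 t ξ θ = ∑ ξ, P ξ θ := by
  by_cases h : θ = θ0
  · subst h
    have key : ∀ ξ, pert P ξ1 ξ2 θ t ξ θ
        = P ξ θ + (if ξ = ξ1 then t else 0) - (if ξ = ξ2 then t else 0) := by
      intro ξ
      by_cases h1 : ξ = ξ1 <;> by_cases h2 : ξ = ξ2
      · exact absurd (h1 ▸ h2 : ξ1 = ξ2) h12
      all_goals simp [pert, h1, h2, h12, h12.symm]
    simp only [key]
    rw [Finset.sum_sub_distrib, Finset.sum_add_distrib,
      Finset.sum_ite_eq' Finset.univ ξ1 (fun _ => t),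
      Finset.sum_ite_eq' Finset.univ ξ2 (fun _ => t)]
    simp
  · simp [pert, h]



/-- The change in the (simplified) objective from moving mass `t` from `(ξ2,θ0)` to `(ξ1,θ0)`. -/
noncomputable def Dfun (α : ℝ) (u : X → Θ → ℝ) (φ : X → ℝ) (P : X → Θ → ℝ)
    (ξ1 ξ2 : X) (θ0 : Θ) (t : ℝ) : ℝ :=
  t * (u ξ1 θ0 - u ξ2 θ0) + α * (t * Real.log (φ ξ1) - t * Real.log (φ ξ2))
  + (1 - α) * (((margX P ξ1 + t) * Real.log (margX P ξ1 + t)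
                  - margX P ξ1 * Real.log (margX P ξ1))
             + ((margX P ξ2 - t) * Real.log (margX P ξ2 - t)
                  - margX P ξ2 * Real.log (margX P ξ2)))
  - (((P ξ1 θ0 + t) * Real.log (P ξ1 θ0 + t) - P ξ1 θ0 * Real.log (P ξ1 θ0))
   + ((P ξ2 θ0 - t) * Real.log (P ξ2 θ0 - t) - P ξ2 θ0 * Real.log (P ξ2 θ0)))

lemma delta_le [DecidableEq X] [DecidableEq Θ]
    (α : ℝ) (u : X → Θ → ℝ)
    (φ : X → ℝ) (hφ0 : ∀ ξ, 0 < φ ξ)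
    (μ : Θ → ℝ) (hμ0 : ∀ θ, 0 < μ θ)
    (P : X → Θ → ℝ) (hP0 : ∀ ξ θ, 0 ≤ P ξ θ) (hPθ : ∀ θ, ∑ ξ, P ξ θ = μ θ)
    (hmax : ∀ Q : X → Θ → ℝ, (∀ ξ θ, 0 ≤ Q ξ θ) → (∀ θ, ∑ ξ, Q ξ θ = μ θ) →
      Uobj α u φ μ Q ≤ Uobj α u φ μ P)
    (ξ1 ξ2 : X) (h12 : ξ1 ≠ ξ2) (θ0 : Θ) (t : ℝ)
    (ht1 : 0 ≤ P ξ1 θ0 + t) (ht2 : 0 ≤ P ξ2 θ0 - t) :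
    Dfun α u φ P ξ1 ξ2 θ0 t ≤ 0 := by
  set Q := pert P ξ1 ξ2 θ0 t with hQ
  have hQ0 : ∀ ξ θ, 0 ≤ Q ξ θ := by
    intro ξ θ
    by_cases h1 : ξ = ξ1
    · subst h1
      rw [hQ, pert_apply_fst]
      by_cases h : θ = θ0
      · rw [if_pos h, h]; exact ht1
      · rw [if_neg h, add_zero]; exact hP0 _ θ
    · by_cases h2 : ξ = ξ2
      · subst h2
        rw [hQ, pert_apply_snd P ξ1 _ θ0 t h12]
        by_cases h : θ = θ0
        · rw [if_pos h]; rw [h]; exact ht2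
        · rw [if_neg h, sub_zero]; exact hP0 _ θ
      · rw [hQ, pert_apply_ne P ξ1 ξ2 θ0 t ξ h1 h2]; exact hP0 ξ θ
  have hQθ : ∀ θ, ∑ ξ, Q ξ θ = μ θ := by
    intro θ; rw [hQ, sum_pert P ξ1 ξ2 θ0 t h12, hPθ]
  have hle := hmax Q hQ0 hQθ
  rw [Uobj_eq α u φ hφ0 μ hμ0 Q hQ0 hQθ, Uobj_eq α u φ hφ0 μ hμ0 P hP0 hPθ] at hle
  -- Now compute the four differing sums.
  have S1 : ∑ ξ, ∑ θ, Q ξ θ * u ξ θ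
      = (∑ ξ, ∑ θ, P ξ θ * u ξ θ) + (t * u ξ1 θ0 + (- t) * u ξ2 θ0) := by
    rw [sum_sub_pair (fun ξ => ∑ θ, Q ξ θ * u ξ θ) (fun ξ => ∑ θ, P ξ θ * u ξ θ)
      ξ1 ξ2 h12 (fun ξ hx1 hx2 => by
        refine Finset.sum_congr rfl fun θ _ => ?_
        simp only [hQ, pert_apply_ne P ξ1 ξ2 θ0 t ξ hx1 hx2])]
    have i1 : ∑ θ, Q ξ1 θ * u ξ1 θ = (∑ θ, P ξ1 θ * u ξ1 θ) + t * u ξ1 θ0 := by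
      rw [sum_sub_single (fun θ => Q ξ1 θ * u ξ1 θ) (fun θ => P ξ1 θ * u ξ1 θ) θ0
        (fun θ hθ => by simp only [hQ, pert_apply_fst, if_neg hθ, add_zero])]
      simp only [hQ, pert_apply_fst, eq_self_iff_true, if_true]; ring
    have i2 : ∑ θ, Q ξ2 θ * u ξ2 θ = (∑ θ, P ξ2 θ * u ξ2 θ) + (-t) * u ξ2 θ0 := by
      rw [sum_sub_single (fun θ => Q ξ2 θ * u ξ2 θ) (fun θ => P ξ2 θ * u ξ2 θ) θ0
        (fun θ hθ => by simp only [hQ, pert_apply_snd P ξ1 ξ2 θ0 t h12, if_neg hθ, sub_zero])]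
      simp only [hQ, pert_apply_snd P ξ1 ξ2 θ0 t h12, eq_self_iff_true, if_true]; ring
    rw [i1, i2]; ring
  have S2 : ∑ ξ, margX Q ξ * Real.log (margX Q ξ)
      = (∑ ξ, margX P ξ * Real.log (margX P ξ))
        + (((margX P ξ1 + t) * Real.log (margX P ξ1 + t)
              - margX P ξ1 * Real.log (margX P ξ1))
         + ((margX P ξ2 - t) * Real.log (margX P ξ2 - t)
              - margX P ξ2 * Real.log (margX P ξ2))) := by
    rw [sum_sub_pair (fun ξ => margX Q ξ * Real.log (margX Q ξ))
      (fun ξ => margX P ξ * Real.log (margX P ξ)) ξ1 ξ2 h12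
      (fun ξ hx1 hx2 => by simp only [hQ, margX_pert_ne P ξ1 ξ2 θ0 t ξ hx1 hx2])]
    rw [hQ, margX_pert_fst, margX_pert_snd P ξ1 ξ2 θ0 t h12]
  have S3 : ∑ ξ, margX Q ξ * Real.log (φ ξ)
      = (∑ ξ, margX P ξ * Real.log (φ ξ))
        + (t * Real.log (φ ξ1) - t * Real.log (φ ξ2)) := by
    rw [sum_sub_pair (fun ξ => margX Q ξ * Real.log (φ ξ))
      (fun ξ => margX P ξ * Real.log (φ ξ)) ξ1 ξ2 h12
      (fun ξ hx1 hx2 => by simp only [hQ, margX_pert_ne P ξ1 ξ2 θ0 t ξ hx1 hx2])]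
    rw [hQ, margX_pert_fst, margX_pert_snd P ξ1 ξ2 θ0 t h12]
    ring
  have S4 : ∑ ξ, ∑ θ, Q ξ θ * Real.log (Q ξ θ)
      = (∑ ξ, ∑ θ, P ξ θ * Real.log (P ξ θ))
        + (((P ξ1 θ0 + t) * Real.log (P ξ1 θ0 + t) - P ξ1 θ0 * Real.log (P ξ1 θ0))
         + ((P ξ2 θ0 - t) * Real.log (P ξ2 θ0 - t) - P ξ2 θ0 * Real.log (P ξ2 θ0))) := by
    rw [sum_sub_pair (fun ξ => ∑ θ, Q ξ θ * Real.log (Q ξ θ))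
      (fun ξ => ∑ θ, P ξ θ * Real.log (P ξ θ)) ξ1 ξ2 h12
      (fun ξ hx1 hx2 => by
        refine Finset.sum_congr rfl fun θ _ => ?_
        simp only [hQ, pert_apply_ne P ξ1 ξ2 θ0 t ξ hx1 hx2])]
    have i1 : ∑ θ, Q ξ1 θ * Real.log (Q ξ1 θ)
        = (∑ θ, P ξ1 θ * Real.log (P ξ1 θ))
          + ((P ξ1 θ0 + t) * Real.log (P ξ1 θ0 + t) - P ξ1 θ0 * Real.log (P ξ1 θ0)) := by
      rw [sum_sub_single (fun θ => Q ξ1 θ * Real.log (Q ξ1 θ))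
        (fun θ => P ξ1 θ * Real.log (P ξ1 θ)) θ0
        (fun θ hθ => by simp only [hQ, pert_apply_fst, if_neg hθ, add_zero])]
      simp only [hQ, pert_apply_fst, eq_self_iff_true, if_true]
    have i2 : ∑ θ, Q ξ2 θ * Real.log (Q ξ2 θ)
        = (∑ θ, P ξ2 θ * Real.log (P ξ2 θ))
          + ((P ξ2 θ0 - t) * Real.log (P ξ2 θ0 - t) - P ξ2 θ0 * Real.log (P ξ2 θ0)) := by
      rw [sum_sub_single (fun θ => Q ξ2 θ * Real.log (Q ξ2 θ))
        (fun θ => P ξ2 θ * Real.log (P ξ2 θ)) θ0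
        (fun θ hθ => by simp only [hQ, pert_apply_snd P ξ1 ξ2 θ0 t h12, if_neg hθ, sub_zero])]
      simp only [hQ, pert_apply_snd P ξ1 ξ2 θ0 t h12, eq_self_iff_true, if_true]
    rw [i1, i2]; ring
  rw [S1, S2, S3, S4] at hle
  rw [Dfun]
  nlinarith [hle]

lemma hasDerivAt_Dfun (α : ℝ) (u : X → Θ → ℝ) (φ : X → ℝ) (P : X → Θ → ℝ)
    (ξ1 ξ2 : X) (θ0 : Θ)
    (hm1 : margX P ξ1 ≠ 0) (hm2 : margX P ξ2 ≠ 0)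
    (hp1 : P ξ1 θ0 ≠ 0) (hp2 : P ξ2 θ0 ≠ 0) :
    HasDerivAt (Dfun α u φ P ξ1 ξ2 θ0)
      ((u ξ1 θ0 - u ξ2 θ0) + α * (Real.log (φ ξ1) - Real.log (φ ξ2))
        + (1 - α) * (Real.log (margX P ξ1) - Real.log (margX P ξ2))
        - (Real.log (P ξ1 θ0) - Real.log (P ξ2 θ0))) 0 := by
  have e1 := hasDerivAt_E_shift (margX P ξ1) hm1 1
  have e2 := hasDerivAt_E_shift (margX P ξ2) hm2 (-1)
  have e3 := hasDerivAt_E_shift (P ξ1 θ0) hp1 1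
  have e4 := hasDerivAt_E_shift (P ξ2 θ0) hp2 (-1)
  simp only [one_mul, mul_one, neg_one_mul, ← sub_eq_add_neg, mul_neg_one] at e1 e2 e3 e4
  have l1 : HasDerivAt (fun t : ℝ => t * (u ξ1 θ0 - u ξ2 θ0)) (u ξ1 θ0 - u ξ2 θ0) 0 := by
    simpa using (hasDerivAt_id (0:ℝ)).mul_const (u ξ1 θ0 - u ξ2 θ0)
  have l2 : HasDerivAt (fun t : ℝ => α * (t * Real.log (φ ξ1) - t * Real.log (φ ξ2)))
      (α * (Real.log (φ ξ1) - Real.log (φ ξ2))) 0 := by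
    have := (((hasDerivAt_id (0:ℝ)).mul_const (Real.log (φ ξ1))).sub
      ((hasDerivAt_id (0:ℝ)).mul_const (Real.log (φ ξ2)))).const_mul α
    simpa using this
  have l3 := (((e1.sub_const (margX P ξ1 * Real.log (margX P ξ1))).add
      (e2.sub_const (margX P ξ2 * Real.log (margX P ξ2)))).const_mul (1 - α))
  have l4 := ((e3.sub_const (P ξ1 θ0 * Real.log (P ξ1 θ0))).add
      (e4.sub_const (P ξ2 θ0 * Real.log (P ξ2 θ0))))
  have := ((l1.add l2).add l3).sub l4
  convert this using 1
  case e'_8 => funext t; simp only [Dfun, Pi.add_apply, Pi.sub_apply]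
  case e'_9 => ring
  all_goals rfl

lemma Dfun_zero (α : ℝ) (u : X → Θ → ℝ) (φ : X → ℝ) (P : X → Θ → ℝ)
    (ξ1 ξ2 : X) (θ0 : Θ) : Dfun α u φ P ξ1 ξ2 θ0 0 = 0 := by
  simp [Dfun]

lemma foc [DecidableEq X] [DecidableEq Θ]
    (α : ℝ) (u : X → Θ → ℝ) (φ : X → ℝ) (P : X → Θ → ℝ)
    (hpos : ∀ ξ θ, 0 < P ξ θ)
    (hDle : ∀ (ξ1 ξ2 : X), ξ1 ≠ ξ2 → ∀ (θ0 : Θ) (t : ℝ),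
      0 ≤ P ξ1 θ0 + t → 0 ≤ P ξ2 θ0 - t → Dfun α u φ P ξ1 ξ2 θ0 t ≤ 0) :
    ∀ (θ0 : Θ) (ξ1 ξ2 : X),
      u ξ1 θ0 + α * Real.log (φ ξ1) + (1 - α) * Real.log (margX P ξ1)
          - Real.log (P ξ1 θ0)
        = u ξ2 θ0 + α * Real.log (φ ξ2) + (1 - α) * Real.log (margX P ξ2)
          - Real.log (P ξ2 θ0) := by
  intro θ0 ξ1 ξ2
  by_cases h12 : ξ1 = ξ2
  · rw [h12]
  · have hp1 := hpos ξ1 θ0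
    have hp2 := hpos ξ2 θ0
    have hm1 : 0 < margX P ξ1 := lt_of_lt_of_le hp1 (le_margX P (fun ξ θ => (hpos ξ θ).le) ξ1 θ0)
    have hm2 : 0 < margX P ξ2 := lt_of_lt_of_le hp2 (le_margX P (fun ξ θ => (hpos ξ θ).le) ξ2 θ0)
    have hloc : IsLocalMax (Dfun α u φ P ξ1 ξ2 θ0) 0 := by
      have hmem : Set.Ioo (-(P ξ1 θ0)) (P ξ2 θ0) ∈ 𝓝 (0 : ℝ) :=
        isOpen_Ioo.mem_nhds ⟨by linarith, hp2⟩
      refine Filter.eventually_of_mem hmem fun t ht => ?_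
      rw [Dfun_zero]
      exact hDle ξ1 ξ2 h12 θ0 t (by linarith [ht.1]) (by linarith [ht.2])
    have hD := hloc.hasDerivAt_eq_zero
      (hasDerivAt_Dfun α u φ P ξ1 ξ2 θ0 hm1.ne' hm2.ne' hp1.ne' hp2.ne')
    linarith [hD]

/-- Slope of `t ↦ (a - t) log (a - t)` at `0` from the right. -/
lemma slope_E_sub (a : ℝ) (ha : a ≠ 0) :
    Tendsto (fun t => ((a - t) * Real.log (a - t) - a * Real.log a) / t) (𝓝[>] (0:ℝ))
      (𝓝 (-(Real.log a + 1))) := by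
  have e := hasDerivAt_E_shift a ha (-1)
  simp only [neg_one_mul, ← sub_eq_add_neg, mul_neg_one] at e
  have hs := hasDerivAt_iff_tendsto_slope.mp e
  have hs2 : Tendsto (fun t => ((a - t) * Real.log (a - t) - a * Real.log a) / t)
      (𝓝[≠] (0:ℝ)) (𝓝 (-(Real.log a + 1))) := by
    refine hs.congr fun t => ?_
    simp [slope_def_field]
  exact hs2.mono_left (nhdsWithin_mono _ fun x hx => ne_of_gt hx)

/-- Slope of `t ↦ (a + t) log (a + t)` at `0` from the right. -/
lemma slope_E_add (a : ℝ) (ha : a ≠ 0) :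
    Tendsto (fun t => ((a + t) * Real.log (a + t) - a * Real.log a) / t) (𝓝[>] (0:ℝ))
      (𝓝 (Real.log a + 1)) := by
  have e := hasDerivAt_E_shift a ha 1
  simp only [one_mul, mul_one] at e
  have hs := hasDerivAt_iff_tendsto_slope.mp e
  have hs2 : Tendsto (fun t => ((a + t) * Real.log (a + t) - a * Real.log a) / t)
      (𝓝[≠] (0:ℝ)) (𝓝 (Real.log a + 1)) := by
    refine hs.congr fun t => ?_
    simp [slope_def_field]
  exact hs2.mono_left (nhdsWithin_mono _ fun x hx => ne_of_gt hx)

lemma pos_of_max [DecidableEq X] [DecidableEq Θ]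
    (α : ℝ) (hα : 0 < α) (hα1 : α < 1)
    (u : X → Θ → ℝ) (φ : X → ℝ)
    (μ : Θ → ℝ) (hμ0 : ∀ θ, 0 < μ θ)
    (P : X → Θ → ℝ) (hP0 : ∀ ξ θ, 0 ≤ P ξ θ) (hPθ : ∀ θ, ∑ ξ, P ξ θ = μ θ)
    (hDle : ∀ (ξ1 ξ2 : X), ξ1 ≠ ξ2 → ∀ (θ0 : Θ) (t : ℝ),
      0 ≤ P ξ1 θ0 + t → 0 ≤ P ξ2 θ0 - t → Dfun α u φ P ξ1 ξ2 θ0 t ≤ 0) :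
    ∀ ξ θ, 0 < P ξ θ := by
  intro ξ1 θ0
  rcases (hP0 ξ1 θ0).eq_or_lt with h | h
  swap
  · exact h
  exfalso
  -- h : 0 = P ξ1 θ0
  obtain ⟨ξ2, hP2⟩ : ∃ ξ2, 0 < P ξ2 θ0 := by
    by_contra hc
    push_neg at hc
    have hs : ∑ ξ, P ξ θ0 ≤ 0 := Finset.sum_nonpos fun ξ _ => hc ξ
    rw [hPθ] at hs
    linarith [hμ0 θ0]
  have h12 : ξ1 ≠ ξ2 := fun e => by rw [e] at h; exact hP2.ne h
  have hm2 : 0 < margX P ξ2 := lt_of_lt_of_le hP2 (le_margX P hP0 ξ2 θ0)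
  have hlog : Tendsto (fun t : ℝ => Dfun α u φ P ξ1 ξ2 θ0 t / t) (𝓝[>] (0:ℝ)) atTop := by
    have L2 := slope_E_sub (margX P ξ2) hm2.ne'
    have L3 := slope_E_sub (P ξ2 θ0) hP2.ne'
    have hneglog : Tendsto (fun t : ℝ => -Real.log t) (𝓝[>] (0:ℝ)) atTop :=
      tendsto_neg_atTop_iff.mpr tendsto_log_nhdsGT_zero
    rcases (margX_nonneg P hP0 ξ1).eq_or_lt with hm1 | hm1
    · -- m1 = 0 : remainder finite, and (1-α)log t - log t = -α log t → +∞
      have base : Tendsto (fun t : ℝ =>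
          ((u ξ1 θ0 - u ξ2 θ0) + α * (Real.log (φ ξ1) - Real.log (φ ξ2))
            + (1 - α) * (((margX P ξ2 - t) * Real.log (margX P ξ2 - t)
                - margX P ξ2 * Real.log (margX P ξ2)) / t)
            - ((P ξ2 θ0 - t) * Real.log (P ξ2 θ0 - t) - P ξ2 θ0 * Real.log (P ξ2 θ0)) / t))
          (𝓝[>] (0:ℝ)) (𝓝 (((u ξ1 θ0 - u ξ2 θ0) + α * (Real.log (φ ξ1) - Real.log (φ ξ2))
            + (1 - α) * (-(Real.log (margX P ξ2) + 1))
            - (-(Real.log (P ξ2 θ0) + 1))))) :=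
        ((tendsto_const_nhds.add (L2.const_mul _)).sub L3)
      have hαlog : Tendsto (fun t : ℝ => α * (-Real.log t)) (𝓝[>] (0:ℝ)) atTop :=
        hneglog.const_mul_atTop hα
      have hsum := base.add_atTop hαlog
      refine hsum.congr' ?_
      filter_upwards [self_mem_nhdsWithin] with t ht
      have ht0 : (t:ℝ) ≠ 0 := ne_of_gt ht
      rw [Dfun, ← h, ← hm1]
      field_simp
      ring
    · -- m1 > 0
      have L1 := slope_E_add (margX P ξ1) hm1.ne'
      have base : Tendsto (fun t : ℝ =>
          ((u ξ1 θ0 - u ξ2 θ0) + α * (Real.log (φ ξ1) - Real.log (φ ξ2))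
            + (1 - α) * (((margX P ξ1 + t) * Real.log (margX P ξ1 + t)
                - margX P ξ1 * Real.log (margX P ξ1)) / t)
            + (1 - α) * (((margX P ξ2 - t) * Real.log (margX P ξ2 - t)
                - margX P ξ2 * Real.log (margX P ξ2)) / t)
            - ((P ξ2 θ0 - t) * Real.log (P ξ2 θ0 - t) - P ξ2 θ0 * Real.log (P ξ2 θ0)) / t))
          (𝓝[>] (0:ℝ)) (𝓝 _) :=
        (((tendsto_const_nhds.add (L1.const_mul _)).add (L2.const_mul _)).sub L3)
      have hsum := base.add_atTop hneglog
      refine hsum.congr' ?_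
      filter_upwards [self_mem_nhdsWithin] with t ht
      have ht0 : (t:ℝ) ≠ 0 := ne_of_gt ht
      rw [Dfun, ← h]
      field_simp
      ring
  have hev1 : ∀ᶠ t in 𝓝[>] (0:ℝ), 1 ≤ Dfun α u φ P ξ1 ξ2 θ0 t / t :=
    hlog.eventually_ge_atTop 1
  have hev2 : ∀ᶠ t in 𝓝[>] (0:ℝ), t ∈ Set.Ioo (0:ℝ) (P ξ2 θ0) :=
    eventually_of_mem (Ioo_mem_nhdsGT_of_mem ⟨le_refl 0, hP2⟩) fun t ht => ht
  obtain ⟨t, h1t, h2t⟩ := (hev1.and hev2).exists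
  have hle := hDle ξ1 ξ2 h12 θ0 t (by rw [← h]; simpa using h2t.1.le)
    (by linarith [h2t.2])
  have ht : 1 * t ≤ Dfun α u φ P ξ1 ξ2 θ0 t := (le_div_iff₀ h2t.1).mp h1t
  linarith [h2t.1]

end AuxLemmas

open Filter Topology in
theorem weighted_multinomial_logit
    (α : ℝ) (hα : 0 < α) (hα1 : α < 1)
    (u : X → Θ → ℝ)
    (φ : X → ℝ) (hφ0 : ∀ ξ, 0 < φ ξ) (hφ1 : ∑ ξ, φ ξ = 1)
    (μ : Θ → ℝ) (hμ0 : ∀ θ, 0 < μ θ) (hμ1 : ∑ θ, μ θ = 1)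
    (P : X → Θ → ℝ)
    (hP0 : ∀ ξ θ, 0 ≤ P ξ θ) (hPθ : ∀ θ, ∑ ξ, P ξ θ = μ θ)
    (hmax : ∀ Q : X → Θ → ℝ, (∀ ξ θ, 0 ≤ Q ξ θ) → (∀ θ, ∑ ξ, Q ξ θ = μ θ) →
      Uobj α u φ μ Q ≤ Uobj α u φ μ P) :
    ∀ ξ θ, ccp P μ ξ θ =
      φ ξ ^ α * margX P ξ ^ (1 - α) * Real.exp (u ξ θ)
        / (∑ ξ', φ ξ' ^ α * margX P ξ' ^ (1 - α) * Real.exp (u ξ' θ)) := by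
  classical
  have hDle : ∀ (ξ1 ξ2 : X), ξ1 ≠ ξ2 → ∀ (θ0 : Θ) (t : ℝ),
      0 ≤ P ξ1 θ0 + t → 0 ≤ P ξ2 θ0 - t → Dfun α u φ P ξ1 ξ2 θ0 t ≤ 0 :=
    fun ξ1 ξ2 h12 θ0 t ht1 ht2 =>
      delta_le α u φ hφ0 μ hμ0 P hP0 hPθ hmax ξ1 ξ2 h12 θ0 t ht1 ht2
  have hpos : ∀ ξ θ, 0 < P ξ θ := pos_of_max α hα hα1 u φ μ hμ0 P hP0 hPθ hDle
  have hfoc := foc α u φ P hpos hDle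
  intro ξ0 θ0
  have hm : ∀ ξ, 0 < margX P ξ := fun ξ =>
    lt_of_lt_of_le (hpos ξ θ0) (le_margX P (fun ξ' θ' => (hpos ξ' θ').le) ξ θ0)
  set c : ℝ := u ξ0 θ0 + α * Real.log (φ ξ0) + (1 - α) * Real.log (margX P ξ0)
    - Real.log (P ξ0 θ0) with hc
  have key : ∀ ξ', P ξ' θ0
      = φ ξ' ^ α * margX P ξ' ^ (1 - α) * Real.exp (u ξ' θ0) * Real.exp (-c) := by
    intro ξ'
    have hfc := hfoc θ0 ξ' ξ0
    have hlog : Real.log (P ξ' θ0)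
        = u ξ' θ0 + α * Real.log (φ ξ') + (1 - α) * Real.log (margX P ξ') - c := by
      rw [hc]; linarith [hfc]
    calc P ξ' θ0 = Real.exp (Real.log (P ξ' θ0)) := (Real.exp_log (hpos ξ' θ0)).symm
      _ = Real.exp (u ξ' θ0 + α * Real.log (φ ξ') + (1 - α) * Real.log (margX P ξ') - c) := by
          rw [hlog]
      _ = φ ξ' ^ α * margX P ξ' ^ (1 - α) * Real.exp (u ξ' θ0) * Real.exp (-c) := by
          rw [Real.rpow_def_of_pos (hφ0 ξ'), Real.rpow_def_of_pos (hm ξ'),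
            ← Real.exp_add, ← Real.exp_add, ← Real.exp_add]
          congr 1
          ring
  have hsum : μ θ0
      = (∑ ξ', φ ξ' ^ α * margX P ξ' ^ (1 - α) * Real.exp (u ξ' θ0)) * Real.exp (-c) := by
    rw [← hPθ θ0, Finset.sum_mul]
    exact Finset.sum_congr rfl fun ξ' _ => key ξ'
  rw [ccp, key ξ0, hsum, mul_div_mul_right _ _ (Real.exp_ne_zero (-c))]
end

section
/- Let X, Θ be finite sets, φ, μ fully supported probability vectors, α ∈ (0,1), u : X × Θ → ℝ bounded. If P maximizes U(P) = E_P[u] − α D_KL(P|_ξ ∥ φ) − I_P(ξ,θ) subject to P|_θ = μ, then the marginal P|_ξ has full support: P(ξ) > 0 for every ξ with φ(ξ) > 0. -/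
/-! Suppose the optimal plan `P` gives a characteristic `ξ₀` zero mass, and mix it with the plan
`R = δ_{ξ₀} ⊗ μ` that always picks `ξ₀`: `Q_t = (1 - t) P + t R`. Since the `ξ`-supports of `P`
and `R` are disjoint, the mutual-information term is linear along the segment, while the
divergence term picks up exactly the entropy of mixing:
`U(Q_t) = (1 - t) U(P) + t U(R) + α h(t)`, with `h` the binary entropy.
As `h(t) ≥ -t log t` has infinite slope at `0` and `α > 0`, some `Q_t` beats `P`. -/

open Finset Real

variable {X Θ : Type*} [Fintype X] [Fintype Θ]

/-- The contribution of a row `p = P(ξ, ·)` to `Uobj`, where `v = u(ξ, ·)` and `w = φ(ξ)`. -/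
noncomputable def rowObj (α : ℝ) (v μ : Θ → ℝ) (w : ℝ) (p : Θ → ℝ) : ℝ :=
  ∑ θ, p θ * v θ - α * ((∑ θ, p θ) * log ((∑ θ, p θ) / w))
    - ∑ θ, p θ * log (p θ / μ θ / ∑ θ', p θ')

section rowObj

variable (α : ℝ) (v μ : Θ → ℝ)

theorem Uobj_eq_sum_rowObj (u : X → Θ → ℝ) (φ : X → ℝ) (P : X → Θ → ℝ) :
    Uobj α u φ μ P = ∑ ξ, rowObj α (u ξ) μ (φ ξ) (P ξ) := by
  simp only [Uobj, rowObj, margX, ccp, sum_sub_distrib, mul_sum]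

@[simp]
theorem rowObj_zero (w : ℝ) : rowObj α v μ w 0 = 0 := by
  simp [rowObj]

theorem rowObj_smul {w : ℝ} (hw : w ≠ 0) (c : ℝ) (p : Θ → ℝ) :
    rowObj α v μ w (c • p) = c * rowObj α v μ w p + α * negMulLog c * ∑ θ, p θ := by
  rcases eq_or_ne c 0 with rfl | hc
  · simp
  have hmass : ∑ θ, c * p θ = c * ∑ θ, p θ := (mul_sum ..).symm
  have hdiv : ∀ m, (c * m) * log (c * m / w) = c * (m * log (m / w)) + c * log c * m := by
    intro m
    rcases eq_or_ne m 0 with rfl | hm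
    · simp
    rw [mul_div_assoc, log_mul hc (div_ne_zero hm hw)]
    ring
  have hratio : ∀ m θ, c * p θ / μ θ / (c * m) = p θ / μ θ / m := fun m θ => by
    rw [mul_div_assoc, mul_div_mul_left _ _ hc]
  simp only [rowObj, Pi.smul_apply, smul_eq_mul, hmass, hdiv, hratio, negMulLog]
  simp only [mul_assoc, ← mul_sum]
  ring

end rowObj

theorem sum_margX_of_sum_eq {P : X → Θ → ℝ} {μ : Θ → ℝ} (hPθ : ∀ θ, ∑ ξ, P ξ θ = μ θ) :
    ∑ ξ, margX P ξ = ∑ θ, μ θ := by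
  rw [← sum_congr rfl fun θ _ => hPθ θ]
  exact sum_comm

theorem Uobj_smul_add_smul_of_disjoint (α : ℝ) (u : X → Θ → ℝ) {φ : X → ℝ}
    (hφ : ∀ ξ, φ ξ ≠ 0) (μ : Θ → ℝ) {P R : X → Θ → ℝ} (hdisj : ∀ ξ, P ξ = 0 ∨ R ξ = 0)
    (s t : ℝ) :
    Uobj α u φ μ (s • P + t • R) =
      s * Uobj α u φ μ P + t * Uobj α u φ μ R
        + α * (negMulLog s * ∑ ξ, margX P ξ + negMulLog t * ∑ ξ, margX R ξ) := by
  have hrow : ∀ ξ, rowObj α (u ξ) μ (φ ξ) (s • P ξ + t • R ξ) =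
      (s * rowObj α (u ξ) μ (φ ξ) (P ξ) + α * negMulLog s * margX P ξ)
        + (t * rowObj α (u ξ) μ (φ ξ) (R ξ) + α * negMulLog t * margX R ξ) := fun ξ => by
    rcases hdisj ξ with h | h <;> simp [h, rowObj_smul _ _ _ (hφ ξ) _, margX]
  simp only [Uobj_eq_sum_rowObj, Pi.add_apply, Pi.smul_apply, hrow, sum_add_distrib, ← mul_sum]
  ring

theorem Uobj_convexComb_of_disjoint (α : ℝ) (u : X → Θ → ℝ) {φ : X → ℝ}
    (hφ : ∀ ξ, φ ξ ≠ 0) (μ : Θ → ℝ) {P R : X → Θ → ℝ} (hdisj : ∀ ξ, P ξ = 0 ∨ R ξ = 0)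
    (hP : ∑ ξ, margX P ξ = 1) (hR : ∑ ξ, margX R ξ = 1) (t : ℝ) :
    Uobj α u φ μ ((1 - t) • P + t • R) =
      (1 - t) * Uobj α u φ μ P + t * Uobj α u φ μ R + α * binEntropy t := by
  rw [Uobj_smul_add_smul_of_disjoint α u hφ μ hdisj, hP, hR,
    binEntropy_eq_negMulLog_add_negMulLog_one_sub]
  ring

theorem convex_setOf_nonneg_and_sum_eq {ι κ : Type*} [Fintype ι] (μ : κ → ℝ) :
    Convex ℝ {Q : ι → κ → ℝ | (∀ ξ θ, 0 ≤ Q ξ θ) ∧ ∀ θ, ∑ ξ, Q ξ θ = μ θ} := by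
  rintro P ⟨hP0, hPθ⟩ R ⟨hR0, hRθ⟩ s t hs ht hst
  refine ⟨fun ξ θ => ?_, fun θ => ?_⟩
  · simp only [Pi.add_apply, Pi.smul_apply, smul_eq_mul]
    have := hP0 ξ θ
    have := hR0 ξ θ
    positivity
  · simp [sum_add_distrib, ← mul_sum, hPθ, hRθ, ← add_mul, hst]

theorem exists_mem_Ioo_mul_add_binEntropy_pos {α : ℝ} (hα : 0 < α) (D : ℝ) :
    ∃ t ∈ Set.Ioo (0 : ℝ) 1, 0 < t * D + α * binEntropy t := by
  set t := min (1 / 2) (exp (D / α) / 2)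
  have ht0 : 0 < t := by positivity
  have ht1 : t < 1 := (min_le_left _ _).trans_lt (by norm_num)
  have hlog : α * log t < D := by
    rw [← lt_div_iff₀' hα, log_lt_iff_lt_exp ht0]
    exact (min_le_right _ _).trans_lt (half_lt_self (exp_pos _))
  have hbin : negMulLog t ≤ binEntropy t := by
    rw [binEntropy_eq_negMulLog_add_negMulLog_one_sub]
    linarith [negMulLog_nonneg (sub_nonneg.2 ht1.le) (sub_le_self 1 ht0.le)]
  refine ⟨t, ⟨ht0, ht1⟩, ?_⟩
  have hgain : 0 < t * (D - α * log t) := mul_pos ht0 (by linarith)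
  rw [negMulLog] at hbin
  nlinarith

theorem optimal_marginal_full_support_general
    (α : ℝ) (hα : 0 < α)
    (u : X → Θ → ℝ)
    (φ : X → ℝ) (hφ0 : ∀ ξ, 0 < φ ξ)
    (μ : Θ → ℝ) (hμ0 : ∀ θ, 0 < μ θ) (hμ1 : ∑ θ, μ θ = 1)
    (P : X → Θ → ℝ)
    (hP0 : ∀ ξ θ, 0 ≤ P ξ θ) (hPθ : ∀ θ, ∑ ξ, P ξ θ = μ θ)
    (hmax : ∀ Q : X → Θ → ℝ, (∀ ξ θ, 0 ≤ Q ξ θ) → (∀ θ, ∑ ξ, Q ξ θ = μ θ) →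
      Uobj α u φ μ Q ≤ Uobj α u φ μ P) :
    ∀ ξ, 0 < φ ξ → 0 < margX P ξ := by
  classical
  intro ξ₀ _
  by_contra! hm
  have hrow : P ξ₀ = 0 := funext fun θ =>
    (sum_eq_zero_iff_of_nonneg fun θ _ => hP0 ξ₀ θ).1
      (hm.antisymm (sum_nonneg fun θ _ => hP0 ξ₀ θ)) θ (mem_univ θ)
  set R : X → Θ → ℝ := Pi.single ξ₀ μ
  have hR0 : ∀ ξ θ, 0 ≤ R ξ θ := fun ξ θ => by
    rcases eq_or_ne ξ ξ₀ with rfl | h <;> simp [R, *, (hμ0 θ).le]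
  have hRθ : ∀ θ, ∑ ξ, R ξ θ = μ θ := fun θ => by
    rw [← Finset.sum_apply, sum_pi_single', if_pos (mem_univ _)]
  have hdisj : ∀ ξ, P ξ = 0 ∨ R ξ = 0 := fun ξ => by
    rcases eq_or_ne ξ ξ₀ with rfl | h
    exacts [Or.inl hrow, Or.inr (Pi.single_eq_of_ne h _)]
  obtain ⟨t, ⟨ht0, ht1⟩, hgain⟩ :=
    exists_mem_Ioo_mul_add_binEntropy_pos hα (Uobj α u φ μ R - Uobj α u φ μ P)
  obtain ⟨hQ0, hQθ⟩ := convex_setOf_nonneg_and_sum_eq μ ⟨hP0, hPθ⟩ ⟨hR0, hRθ⟩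
    (sub_nonneg.2 ht1.le) ht0.le (sub_add_cancel 1 t)
  have hmass : ∀ Q : X → Θ → ℝ, (∀ θ, ∑ ξ, Q ξ θ = μ θ) → ∑ ξ, margX Q ξ = 1 :=
    fun Q hQ => (sum_margX_of_sum_eq hQ).trans hμ1
  have hopt := hmax _ hQ0 hQθ
  rw [Uobj_convexComb_of_disjoint α u (fun ξ => (hφ0 ξ).ne') μ hdisj (hmass P hPθ)
    (hmass R hRθ)] at hopt
  linarith

theorem optimal_marginal_full_support
    (α : ℝ) (hα : 0 < α) (hα1 : α < 1)
    (u : X → Θ → ℝ)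
    (φ : X → ℝ) (hφ0 : ∀ ξ, 0 < φ ξ) (hφ1 : ∑ ξ, φ ξ = 1)
    (μ : Θ → ℝ) (hμ0 : ∀ θ, 0 < μ θ) (hμ1 : ∑ θ, μ θ = 1)
    (P : X → Θ → ℝ)
    (hP0 : ∀ ξ θ, 0 ≤ P ξ θ) (hPθ : ∀ θ, ∑ ξ, P ξ θ = μ θ)
    (hmax : ∀ Q : X → Θ → ℝ, (∀ ξ θ, 0 ≤ Q ξ θ) → (∀ θ, ∑ ξ, Q ξ θ = μ θ) →
      Uobj α u φ μ Q ≤ Uobj α u φ μ P) :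
    ∀ ξ, 0 < φ ξ → 0 < margX P ξ :=
  optimal_marginal_full_support_general α hα u φ hφ0 μ hμ0 hμ1 P hP0 hPθ hmax
end

section
/- Fix α ∈ (0,1), finite sets X and Θ, fully supported priors φ on X and μ on Θ, and u : X × Θ → ℝ. For a probability vector ν on X with ν ≪ φ, define f(ν) = Σ_θ μ(θ) log( Σ_ξ φ(ξ) e^{u(ξ,θ)} (ν(ξ)/φ(ξ))^{1−α} ). Then f is strictly concave on the simplex of probability vectors absolutely continuous w.r.t. φ: for distinct ν, γ and β ∈ (0,1), f(βγ + (1−β)ν) > β f(γ) + (1−β) f(ν). Consequently, f has a unique maximizer. -/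
open Finset Real

/-- The Jensen envelope `f(ν) = Σ_θ μ(θ) log( Σ_ξ φ(ξ) e^{u(ξ,θ)} (ν(ξ)/φ(ξ))^{1−α} )`. -/
noncomputable def fJen {X Θ : Type*} [Fintype X] [Fintype Θ]
    (α : ℝ) (u : X → Θ → ℝ) (φ : X → ℝ) (μ : Θ → ℝ) (ν : X → ℝ) : ℝ :=
  ∑ θ, μ θ * Real.log (∑ ξ, φ ξ * Real.exp (u ξ θ) * (ν ξ / φ ξ) ^ (1 - α))

theorem fJen_strictConcave_and_unique_max
    {X Θ : Type*} [Fintype X] [Fintype Θ] [Nonempty X] [Nonempty Θ]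
    (α : ℝ) (hα : 0 < α) (hα1 : α < 1)
    (u : X → Θ → ℝ)
    (φ : X → ℝ) (hφ0 : ∀ ξ, 0 < φ ξ) (hφ1 : ∑ ξ, φ ξ = 1)
    (μ : Θ → ℝ) (hμ0 : ∀ θ, 0 < μ θ) (hμ1 : ∑ θ, μ θ = 1) :
    (∀ ν γ : X → ℝ, (∀ ξ, 0 ≤ ν ξ) → (∑ ξ, ν ξ = 1) →
        (∀ ξ, 0 ≤ γ ξ) → (∑ ξ, γ ξ = 1) → ν ≠ γ →
      ∀ β : ℝ, 0 < β → β < 1 →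
        β * fJen α u φ μ γ + (1 - β) * fJen α u φ μ ν
          < fJen α u φ μ (fun ξ => β * γ ξ + (1 - β) * ν ξ)) ∧
    (∃! ν : X → ℝ, (∀ ξ, 0 ≤ ν ξ) ∧ (∑ ξ, ν ξ = 1) ∧
      ∀ γ : X → ℝ, (∀ ξ, 0 ≤ γ ξ) → (∑ ξ, γ ξ = 1) →
        fJen α u φ μ γ ≤ fJen α u φ μ ν) := by
  set p : ℝ := 1 - α with hpdef
  have hp0 : 0 < p := by simp only [hpdef]; linarith
  have hp1 : p < 1 := by simp only [hpdef]; linarith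
  set S : (X → ℝ) → Θ → ℝ :=
    fun ρ θ => ∑ ξ, φ ξ * Real.exp (u ξ θ) * (ρ ξ / φ ξ) ^ p with hSdef
  have hfJen : ∀ ρ, fJen α u φ μ ρ = ∑ θ, μ θ * Real.log (S ρ θ) := by
    intro ρ; rfl
  -- positivity of the inner sum on the simplex
  have hSpos : ∀ ρ : X → ℝ, (∀ ξ, 0 ≤ ρ ξ) → (∑ ξ, ρ ξ = 1) → ∀ θ, 0 < S ρ θ := by
    intro ρ hρ0 hρ1 θ
    obtain ⟨ξ0, hξ0⟩ : ∃ ξ, 0 < ρ ξ := by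
      by_contra h
      push_neg at h
      have : ∑ ξ, ρ ξ = 0 :=
        Finset.sum_eq_zero fun ξ _ => le_antisymm (h ξ) (hρ0 ξ)
      rw [hρ1] at this; norm_num at this
    refine Finset.sum_pos' (fun ξ _ => ?_) ⟨ξ0, Finset.mem_univ _, ?_⟩
    · have h1 : (0:ℝ) ≤ ρ ξ / φ ξ := div_nonneg (hρ0 ξ) (hφ0 ξ).le
      exact mul_nonneg (mul_nonneg (hφ0 ξ).le (Real.exp_pos _).le) (Real.rpow_nonneg h1 p)
    · have h1 : (0:ℝ) < ρ ξ0 / φ ξ0 := div_pos hξ0 (hφ0 ξ0)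
      exact mul_pos (mul_pos (hφ0 ξ0) (Real.exp_pos _)) (Real.rpow_pos_of_pos h1 p)
  -- the key strict concavity statement
  have key : ∀ ν γ : X → ℝ, (∀ ξ, 0 ≤ ν ξ) → (∑ ξ, ν ξ = 1) →
      (∀ ξ, 0 ≤ γ ξ) → (∑ ξ, γ ξ = 1) → ν ≠ γ →
      ∀ β : ℝ, 0 < β → β < 1 →
        β * fJen α u φ μ γ + (1 - β) * fJen α u φ μ ν
          < fJen α u φ μ (fun ξ => β * γ ξ + (1 - β) * ν ξ) := by
    intro ν γ hν0 hν1 hγ0 hγ1 hne β hβ hβ1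
    set m : X → ℝ := fun ξ => β * γ ξ + (1 - β) * ν ξ with hmdef
    have hm0 : ∀ ξ, 0 ≤ m ξ := by
      intro ξ; have := hν0 ξ; have := hγ0 ξ; simp only [hmdef]; nlinarith
    have hm1 : ∑ ξ, m ξ = 1 := by
      simp only [hmdef]
      rw [Finset.sum_add_distrib, ← Finset.mul_sum, ← Finset.mul_sum, hν1, hγ1]; ring
    -- termwise concavity
    have hterm : ∀ θ ξ, β * (φ ξ * Real.exp (u ξ θ) * (γ ξ / φ ξ) ^ p)
        + (1 - β) * (φ ξ * Real.exp (u ξ θ) * (ν ξ / φ ξ) ^ p)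
        ≤ φ ξ * Real.exp (u ξ θ) * (m ξ / φ ξ) ^ p := by
      intro θ ξ
      have hmix : m ξ / φ ξ = β * (γ ξ / φ ξ) + (1 - β) * (ν ξ / φ ξ) := by
        field_simp [hmdef]
        rfl
      have hcc := (Real.concaveOn_rpow hp0.le hp1.le).2
        (Set.mem_Ici.2 (div_nonneg (hγ0 ξ) (hφ0 ξ).le))
        (Set.mem_Ici.2 (div_nonneg (hν0 ξ) (hφ0 ξ).le))
        hβ.le (by linarith : (0:ℝ) ≤ 1 - β) (by ring)
      simp only [smul_eq_mul] at hcc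
      rw [hmix]
      have hpos : 0 < φ ξ * Real.exp (u ξ θ) := mul_pos (hφ0 ξ) (Real.exp_pos _)
      calc β * (φ ξ * Real.exp (u ξ θ) * (γ ξ / φ ξ) ^ p)
            + (1 - β) * (φ ξ * Real.exp (u ξ θ) * (ν ξ / φ ξ) ^ p)
          = φ ξ * Real.exp (u ξ θ)
              * (β * (γ ξ / φ ξ) ^ p + (1 - β) * (ν ξ / φ ξ) ^ p) := by ring
        _ ≤ φ ξ * Real.exp (u ξ θ)
              * (β * (γ ξ / φ ξ) + (1 - β) * (ν ξ / φ ξ)) ^ p := by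
            exact mul_le_mul_of_nonneg_left hcc hpos.le
    -- strict termwise at a point of difference
    obtain ⟨ξ1, hξ1⟩ : ∃ ξ, ν ξ ≠ γ ξ := Function.ne_iff.1 hne
    have htermstrict : ∀ θ, β * (φ ξ1 * Real.exp (u ξ1 θ) * (γ ξ1 / φ ξ1) ^ p)
        + (1 - β) * (φ ξ1 * Real.exp (u ξ1 θ) * (ν ξ1 / φ ξ1) ^ p)
        < φ ξ1 * Real.exp (u ξ1 θ) * (m ξ1 / φ ξ1) ^ p := by
      intro θ
      have hmix : m ξ1 / φ ξ1 = β * (γ ξ1 / φ ξ1) + (1 - β) * (ν ξ1 / φ ξ1) := by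
        field_simp [hmdef]
        rfl
      have hdiff : γ ξ1 / φ ξ1 ≠ ν ξ1 / φ ξ1 := by
        intro h
        rw [div_eq_div_iff (hφ0 ξ1).ne' (hφ0 ξ1).ne'] at h
        exact hξ1 (by nlinarith [hφ0 ξ1] : ν ξ1 = γ ξ1)
      have hcc := (Real.strictConcaveOn_rpow hp0 hp1).2
        (Set.mem_Ici.2 (div_nonneg (hγ0 ξ1) (hφ0 ξ1).le))
        (Set.mem_Ici.2 (div_nonneg (hν0 ξ1) (hφ0 ξ1).le))
        hdiff hβ (by linarith : (0:ℝ) < 1 - β) (by ring)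
      simp only [smul_eq_mul] at hcc
      rw [hmix]
      have hpos : 0 < φ ξ1 * Real.exp (u ξ1 θ) := mul_pos (hφ0 ξ1) (Real.exp_pos _)
      calc β * (φ ξ1 * Real.exp (u ξ1 θ) * (γ ξ1 / φ ξ1) ^ p)
            + (1 - β) * (φ ξ1 * Real.exp (u ξ1 θ) * (ν ξ1 / φ ξ1) ^ p)
          = φ ξ1 * Real.exp (u ξ1 θ)
              * (β * (γ ξ1 / φ ξ1) ^ p + (1 - β) * (ν ξ1 / φ ξ1) ^ p) := by ring
        _ < φ ξ1 * Real.exp (u ξ1 θ)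
              * (β * (γ ξ1 / φ ξ1) + (1 - β) * (ν ξ1 / φ ξ1)) ^ p := by
            exact mul_lt_mul_of_pos_left hcc hpos
    -- strict inequality of the inner sums
    have hSlt : ∀ θ, β * S γ θ + (1 - β) * S ν θ < S m θ := by
      intro θ
      have : ∑ ξ, (β * (φ ξ * Real.exp (u ξ θ) * (γ ξ / φ ξ) ^ p)
          + (1 - β) * (φ ξ * Real.exp (u ξ θ) * (ν ξ / φ ξ) ^ p))
          < ∑ ξ, φ ξ * Real.exp (u ξ θ) * (m ξ / φ ξ) ^ p := by
        refine Finset.sum_lt_sum (fun ξ _ => hterm θ ξ)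
          ⟨ξ1, Finset.mem_univ _, htermstrict θ⟩
      calc β * S γ θ + (1 - β) * S ν θ
          = ∑ ξ, (β * (φ ξ * Real.exp (u ξ θ) * (γ ξ / φ ξ) ^ p)
            + (1 - β) * (φ ξ * Real.exp (u ξ θ) * (ν ξ / φ ξ) ^ p)) := by
            simp only [hSdef, Finset.mul_sum, Finset.sum_add_distrib]
        _ < ∑ ξ, φ ξ * Real.exp (u ξ θ) * (m ξ / φ ξ) ^ p := this
        _ = S m θ := rfl
    -- per-θ log inequality
    have hlog : ∀ θ, β * Real.log (S γ θ) + (1 - β) * Real.log (S ν θ)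
        < Real.log (S m θ) := by
      intro θ
      have hγp := hSpos γ hγ0 hγ1 θ
      have hνp := hSpos ν hν0 hν1 θ
      have hmixpos : 0 < β * S γ θ + (1 - β) * S ν θ := by nlinarith
      have h1 : β * Real.log (S γ θ) + (1 - β) * Real.log (S ν θ)
          ≤ Real.log (β * S γ θ + (1 - β) * S ν θ) := by
        have := strictConcaveOn_log_Ioi.concaveOn.2
          (Set.mem_Ioi.2 hγp) (Set.mem_Ioi.2 hνp)
          hβ.le (by linarith : (0:ℝ) ≤ 1 - β) (by ring)
        simpa [smul_eq_mul] using this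
      have h2 : Real.log (β * S γ θ + (1 - β) * S ν θ) < Real.log (S m θ) :=
        Real.log_lt_log hmixpos (hSlt θ)
      linarith
    -- combine
    rw [hfJen, hfJen, hfJen]
    calc β * ∑ θ, μ θ * Real.log (S γ θ) + (1 - β) * ∑ θ, μ θ * Real.log (S ν θ)
        = ∑ θ, μ θ * (β * Real.log (S γ θ) + (1 - β) * Real.log (S ν θ)) := by
          rw [Finset.mul_sum, Finset.mul_sum, ← Finset.sum_add_distrib]
          exact Finset.sum_congr rfl fun θ _ => by ring
      _ < ∑ θ, μ θ * Real.log (S m θ) := by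
          refine Finset.sum_lt_sum_of_nonempty Finset.univ_nonempty fun θ _ => ?_
          exact mul_lt_mul_of_pos_left (hlog θ) (hμ0 θ)
  refine ⟨key, ?_⟩
  -- existence of a maximizer
  have hφmem : φ ∈ stdSimplex ℝ X := ⟨fun ξ => (hφ0 ξ).le, hφ1⟩
  have hcont : ContinuousOn (fJen α u φ μ) (stdSimplex ℝ X) := by
    have : ∀ θ, ContinuousOn (fun ρ => μ θ * Real.log (S ρ θ)) (stdSimplex ℝ X) := by
      intro θ
      refine continuousOn_const.mul (ContinuousOn.log ?_ ?_)
      · refine continuousOn_finset_sum _ fun ξ _ => ?_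
        exact (continuous_const.mul
          ((Real.continuous_rpow_const hp0.le).comp
            (by fun_prop : Continuous fun ρ : X → ℝ => ρ ξ / φ ξ))).continuousOn
      · intro ρ hρ
        exact (hSpos ρ hρ.1 hρ.2 θ).ne'
    have := continuousOn_finset_sum (Finset.univ : Finset Θ)
      (fun θ _ => this θ)
    convert this using 1
    exact funext fun ρ => hfJen ρ
  obtain ⟨ν, hνmem, hνmax'⟩ :=
    (isCompact_stdSimplex ℝ X).exists_isMaxOn ⟨φ, hφmem⟩ hcont
  have hνmax : ∀ γ : X → ℝ, γ ∈ stdSimplex ℝ X → fJen α u φ μ γ ≤ fJen α u φ μ ν :=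
    fun γ hγ => hνmax' hγ
  refine ⟨ν, ⟨hνmem.1, hνmem.2, fun γ hγ0 hγ1 => hνmax γ ⟨hγ0, hγ1⟩⟩, ?_⟩
  -- uniqueness
  rintro γ ⟨hγ0, hγ1, hγmax⟩
  by_contra hne
  have h1 := key ν γ hνmem.1 hνmem.2 hγ0 hγ1 (fun h => hne h.symm)
    (1/2) (by norm_num) (by norm_num)
  have hγν : fJen α u φ μ γ = fJen α u φ μ ν :=
    le_antisymm (hνmax γ ⟨hγ0, hγ1⟩) (hγmax ν hνmem.1 hνmem.2)
  have hm0 : ∀ ξ, 0 ≤ (1/2 : ℝ) * γ ξ + (1 - 1/2) * ν ξ := fun ξ => by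
    have := hγ0 ξ; have := hνmem.1 ξ; linarith
  have hm1 : ∑ ξ, ((1/2 : ℝ) * γ ξ + (1 - 1/2) * ν ξ) = 1 := by
    rw [Finset.sum_add_distrib, ← Finset.mul_sum, ← Finset.mul_sum, hγ1, hνmem.2]; ring
  have h2 := hνmax (fun ξ => (1/2 : ℝ) * γ ξ + (1 - 1/2) * ν ξ) ⟨hm0, hm1⟩
  rw [hγν] at h1
  linarith
end

section
/- Let X, Θ be finite sets with fully supported probability vectors ν on X and μ on Θ, and let c : X × Θ → ℝ. Suppose a joint probability P with marginals P|_ξ = ν, P|_θ = μ satisfies P(ξ,θ) = ν(ξ) μ(θ) e^{−a(ξ) − b(θ) − c(ξ,θ)} for some functions a : X → ℝ and b : Θ → ℝ (Schrödinger potentials). Then P is the unique minimizer of Q ↦ Σ_{ξ,θ} Q(ξ,θ) c(ξ,θ) + D_KL(Q ∥ ν ⊗ μ) over all joint probabilities Q with Q|_ξ = ν and Q|_θ = μ. -/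
open Finset Real

/-- Entropic optimal transport cost: `Σ Q c + D_KL(Q ∥ ν ⊗ μ)` (finite case,
with the `0 log 0 = 0` convention handled by multiplication by zero). -/
noncomputable def eotCost {X Θ : Type*} [Fintype X] [Fintype Θ]
    (c : X → Θ → ℝ) (ν : X → ℝ) (μ : Θ → ℝ) (Q : X → Θ → ℝ) : ℝ :=
  (∑ ξ, ∑ θ, Q ξ θ * c ξ θ) + ∑ ξ, ∑ θ, Q ξ θ * Real.log (Q ξ θ / (ν ξ * μ θ))

/-!
For a coupling `Q` of `ν` and `μ`, the Schrödinger form of `P` gives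
`c = -log (P / (ν ⊗ μ)) - a - b`, so that
`eotCost Q = D_KL(Q ∥ P) - (Σ ν a + Σ μ b)`: the potential term only sees the marginals of `Q`.
Hence `eotCost Q - eotCost P = D_KL(Q ∥ P)`, which is nonnegative and vanishes only at `Q = P`
by Gibbs' inequality, written as `D_KL(Q ∥ P) = Σ P · klFun (Q / P)` with `klFun x = x log x + 1 - x`.
-/

open InformationTheory

lemma mul_klFun_div {p : ℝ} (q : ℝ) (hp : p ≠ 0) :
    p * klFun (q / p) = q * log (q / p) + p - q := by
  rw [klFun_apply]
  field_simp

lemma mul_klFun_div_nonneg {p q : ℝ} (hp : 0 < p) (hq : 0 ≤ q) : 0 ≤ p * klFun (q / p) :=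
  mul_nonneg hp.le (klFun_nonneg (div_nonneg hq hp.le))

section Gibbs

variable {ι : Type*} [Fintype ι] {p q : ι → ℝ}

lemma sum_mul_log_div_eq_sum_mul_klFun (hp : ∀ i, p i ≠ 0) (hsum : ∑ i, q i = ∑ i, p i) :
    ∑ i, q i * log (q i / p i) = ∑ i, p i * klFun (q i / p i) := by
  simp only [mul_klFun_div _ (hp _), sum_sub_distrib, sum_add_distrib, hsum, add_sub_cancel_right]

lemma sum_mul_log_div_nonneg (hp : ∀ i, 0 < p i) (hq : ∀ i, 0 ≤ q i)
    (hsum : ∑ i, q i = ∑ i, p i) : 0 ≤ ∑ i, q i * log (q i / p i) := by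
  rw [sum_mul_log_div_eq_sum_mul_klFun (fun i => (hp i).ne') hsum]
  exact sum_nonneg fun i _ => mul_klFun_div_nonneg (hp i) (hq i)

lemma eq_of_sum_mul_log_div_eq_zero (hp : ∀ i, 0 < p i) (hq : ∀ i, 0 ≤ q i)
    (hsum : ∑ i, q i = ∑ i, p i) (h : ∑ i, q i * log (q i / p i) = 0) : q = p := by
  rw [sum_mul_log_div_eq_sum_mul_klFun (fun i => (hp i).ne') hsum,
    sum_eq_zero_iff_of_nonneg fun i _ => mul_klFun_div_nonneg (hp i) (hq i)] at h
  funext i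
  have hkl : klFun (q i / p i) = 0 := (mul_eq_zero.1 (h i (mem_univ i))).resolve_left (hp i).ne'
  exact (div_eq_one_iff_eq (hp i).ne').1
    ((klFun_eq_zero_iff (div_nonneg (hq i) (hp i).le)).1 hkl)

end Gibbs

section Coupling

variable {X Θ : Type*} [Fintype X] [Fintype Θ]

lemma sum_sum_mul_add_eq_of_marginals {α : Type*} [CommSemiring α] {R : X → Θ → α}
    {ν : X → α} {μ : Θ → α} (hRν : ∀ ξ, ∑ θ, R ξ θ = ν ξ) (hRμ : ∀ θ, ∑ ξ, R ξ θ = μ θ)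
    (a : X → α) (b : Θ → α) :
    ∑ ξ, ∑ θ, R ξ θ * (a ξ + b θ) = ∑ ξ, ν ξ * a ξ + ∑ θ, μ θ * b θ := by
  simp only [mul_add, sum_add_distrib]
  rw [sum_comm (f := fun ξ θ => R ξ θ * b θ)]
  simp only [← sum_mul, hRν, hRμ]

lemma mul_log_div_eq_add (r : ℝ) {p s : ℝ} (hp : p ≠ 0) (hs : s ≠ 0) :
    r * log (r / s) = r * log (r / p) + r * log (p / s) := by
  rcases eq_or_ne r 0 with rfl | hr
  · simp
  rw [← mul_add, ← log_mul (div_ne_zero hr hp) (div_ne_zero hp hs), div_mul_div_cancel₀ hp]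

lemma eotCost_eq_sum_mul_log_div_sub {ν : X → ℝ} {μ : Θ → ℝ} {c : X → Θ → ℝ} {a : X → ℝ}
    {b : Θ → ℝ} {P R : X → Θ → ℝ} (hν : ∀ ξ, ν ξ ≠ 0) (hμ : ∀ θ, μ θ ≠ 0)
    (hP : ∀ ξ θ, P ξ θ = ν ξ * μ θ * exp (-a ξ - b θ - c ξ θ))
    (hRν : ∀ ξ, ∑ θ, R ξ θ = ν ξ) (hRμ : ∀ θ, ∑ ξ, R ξ θ = μ θ) :
    eotCost c ν μ R =
      ∑ ξ, ∑ θ, R ξ θ * log (R ξ θ / P ξ θ) - (∑ ξ, ν ξ * a ξ + ∑ θ, μ θ * b θ) := by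
  have hνμ ξ θ : ν ξ * μ θ ≠ 0 := mul_ne_zero (hν ξ) (hμ θ)
  have hP0 ξ θ : P ξ θ ≠ 0 := hP ξ θ ▸ mul_ne_zero (hνμ ξ θ) (exp_pos _).ne'
  have hlog ξ θ : log (P ξ θ / (ν ξ * μ θ)) = -a ξ - b θ - c ξ θ := by
    rw [hP, mul_div_cancel_left₀ _ (hνμ ξ θ), log_exp]
  have hpoint ξ θ : R ξ θ * c ξ θ + R ξ θ * log (R ξ θ / (ν ξ * μ θ)) =
      R ξ θ * log (R ξ θ / P ξ θ) - R ξ θ * (a ξ + b θ) := by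
    rw [mul_log_div_eq_add _ (hP0 ξ θ) (hνμ ξ θ), hlog]
    ring
  rw [eotCost, ← sum_sum_mul_add_eq_of_marginals hRν hRμ]
  simp only [← sum_add_distrib, ← sum_sub_distrib, hpoint]

end Coupling

theorem schrodinger_potentials_sufficiency_general
    {X Θ : Type*} [Fintype X] [Fintype Θ]
    (ν : X → ℝ) (hν0 : ∀ ξ, 0 < ν ξ)
    (μ : Θ → ℝ) (hμ0 : ∀ θ, 0 < μ θ)
    (c : X → Θ → ℝ) (a : X → ℝ) (b : Θ → ℝ)
    (P : X → Θ → ℝ)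
    (hP : ∀ ξ θ, P ξ θ = ν ξ * μ θ * Real.exp (-a ξ - b θ - c ξ θ))
    (hPν : ∀ ξ, ∑ θ, P ξ θ = ν ξ) (hPμ : ∀ θ, ∑ ξ, P ξ θ = μ θ) :
    ∀ Q : X → Θ → ℝ, (∀ ξ θ, 0 ≤ Q ξ θ) →
      (∀ ξ, ∑ θ, Q ξ θ = ν ξ) → (∀ θ, ∑ ξ, Q ξ θ = μ θ) →
      eotCost c ν μ P ≤ eotCost c ν μ Q ∧
        (eotCost c ν μ Q = eotCost c ν μ P → Q = P) := by
  intro Q hQ0 hQν hQμ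
  have hPpos ξ θ : 0 < P ξ θ := hP ξ θ ▸ mul_pos (mul_pos (hν0 ξ) (hμ0 θ)) (exp_pos _)
  have hcost {R : X → Θ → ℝ} := eotCost_eq_sum_mul_log_div_sub (R := R)
    (fun ξ => (hν0 ξ).ne') (fun θ => (hμ0 θ).ne') hP
  have hgap : eotCost c ν μ Q - eotCost c ν μ P =
      ∑ x : X × Θ, Q x.1 x.2 * log (Q x.1 x.2 / P x.1 x.2) := by
    rw [hcost hQν hQμ, hcost hPν hPμ, Fintype.sum_prod_type]
    simp only [div_self (hPpos _ _).ne', log_one, mul_zero, sum_const_zero]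
    ring
  have hmass : ∑ x : X × Θ, Q x.1 x.2 = ∑ x : X × Θ, P x.1 x.2 := by
    simp only [Fintype.sum_prod_type, hQν, hPν]
  have hPpos' (x : X × Θ) := hPpos x.1 x.2
  have hQ0' (x : X × Θ) := hQ0 x.1 x.2
  refine ⟨sub_nonneg.1 (hgap ▸ sum_mul_log_div_nonneg hPpos' hQ0' hmass), fun h => ?_⟩
  have hQP := eq_of_sum_mul_log_div_eq_zero hPpos' hQ0' hmass (by rw [← hgap, h, sub_self])
  exact funext₂ fun ξ θ => congrFun hQP (ξ, θ)

theorem schrodinger_potentials_sufficiency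
    {X Θ : Type*} [Fintype X] [Fintype Θ]
    (ν : X → ℝ) (hν0 : ∀ ξ, 0 < ν ξ) (hν1 : ∑ ξ, ν ξ = 1)
    (μ : Θ → ℝ) (hμ0 : ∀ θ, 0 < μ θ) (hμ1 : ∑ θ, μ θ = 1)
    (c : X → Θ → ℝ) (a : X → ℝ) (b : Θ → ℝ)
    (P : X → Θ → ℝ)
    (hP : ∀ ξ θ, P ξ θ = ν ξ * μ θ * Real.exp (-a ξ - b θ - c ξ θ))
    (hPν : ∀ ξ, ∑ θ, P ξ θ = ν ξ) (hPμ : ∀ θ, ∑ ξ, P ξ θ = μ θ) :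
    ∀ Q : X → Θ → ℝ, (∀ ξ θ, 0 ≤ Q ξ θ) →
      (∀ ξ, ∑ θ, Q ξ θ = ν ξ) → (∀ θ, ∑ ξ, Q ξ θ = μ θ) →
      eotCost c ν μ P ≤ eotCost c ν μ Q ∧
        (eotCost c ν μ Q = eotCost c ν μ P → Q = P) :=
  schrodinger_potentials_sufficiency_general ν hν0 μ hμ0 c a b P hP hPν hPμ
end

section
/- Let X, Θ be finite sets, ν, μ fully supported probability vectors, c : X × Θ → ℝ. If (a,b) and (a',b') are two pairs of functions such that both P(ξ,θ) = ν(ξ)μ(θ)e^{−a(ξ)−b(θ)−c(ξ,θ)} and P(ξ,θ) = ν(ξ)μ(θ)e^{−a'(ξ)−b'(θ)−c(ξ,θ)} define the same probability measure P with marginals ν and μ, then there exists a constant k ∈ ℝ such that a'(ξ) = a(ξ) + k for all ξ and b'(θ) = b(θ) − k for all θ. -/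
open Finset Real

/-! Every point carries positive reference mass `ν ξ * μ θ`, so it cancels from the two
expressions for `P ξ θ`, and injectivity of `exp` gives `a₁ ξ + b₁ θ = a₂ ξ + b₂ θ` for all `ξ, θ`.
A sum of a function of `ξ` and a function of `θ` determines both summands up to opposite
constants. -/

theorem exists_translation_of_add_eq_add {X Θ G : Type*} [Nonempty X] [Nonempty Θ]
    [AddCommGroup G] (a₁ a₂ : X → G) (b₁ b₂ : Θ → G)
    (h : ∀ ξ θ, a₁ ξ + b₁ θ = a₂ ξ + b₂ θ) :
    ∃ k : G, (∀ ξ, a₂ ξ = a₁ ξ + k) ∧ (∀ θ, b₂ θ = b₁ θ - k) := by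
  obtain ⟨ξ₀⟩ := ‹Nonempty X›
  obtain ⟨θ₀⟩ := ‹Nonempty Θ›
  have hsub : ∀ ξ θ, a₂ ξ - a₁ ξ = b₁ θ - b₂ θ := fun ξ θ =>
    sub_eq_sub_iff_add_eq_add.2 (by rw [add_comm (b₁ θ), h])
  refine ⟨b₁ θ₀ - b₂ θ₀, fun ξ => ?_, fun θ => ?_⟩
  · rw [← hsub ξ θ₀]
    abel
  · rw [← hsub ξ₀ θ₀, hsub ξ₀ θ]
    abel

theorem schrodinger_potentials_unique_up_to_translation_general
    {X Θ : Type*} [Nonempty X] [Nonempty Θ]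
    (ν : X → ℝ) (hν0 : ∀ ξ, 0 < ν ξ)
    (μ : Θ → ℝ) (hμ0 : ∀ θ, 0 < μ θ)
    (c : X → Θ → ℝ)
    (a₁ a₂ : X → ℝ) (b₁ b₂ : Θ → ℝ)
    (P : X → Θ → ℝ)
    (hP₁ : ∀ ξ θ, P ξ θ = ν ξ * μ θ * Real.exp (-a₁ ξ - b₁ θ - c ξ θ))
    (hP₂ : ∀ ξ θ, P ξ θ = ν ξ * μ θ * Real.exp (-a₂ ξ - b₂ θ - c ξ θ)) :
    ∃ k : ℝ, (∀ ξ, a₂ ξ = a₁ ξ + k) ∧ (∀ θ, b₂ θ = b₁ θ - k) := by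
  refine exists_translation_of_add_eq_add a₁ a₂ b₁ b₂ fun ξ θ => ?_
  have hmass : ν ξ * μ θ ≠ 0 := (mul_pos (hν0 ξ) (hμ0 θ)).ne'
  have hexp := Real.exp_injective (mul_left_cancel₀ hmass ((hP₁ ξ θ).symm.trans (hP₂ ξ θ)))
  linarith

theorem schrodinger_potentials_unique_up_to_translation
    {X Θ : Type*} [Fintype X] [Fintype Θ] [Nonempty X] [Nonempty Θ]
    (ν : X → ℝ) (hν0 : ∀ ξ, 0 < ν ξ) (hν1 : ∑ ξ, ν ξ = 1)
    (μ : Θ → ℝ) (hμ0 : ∀ θ, 0 < μ θ) (hμ1 : ∑ θ, μ θ = 1)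
    (c : X → Θ → ℝ)
    (a₁ a₂ : X → ℝ) (b₁ b₂ : Θ → ℝ)
    (P : X → Θ → ℝ)
    (hP₁ : ∀ ξ θ, P ξ θ = ν ξ * μ θ * Real.exp (-a₁ ξ - b₁ θ - c ξ θ))
    (hP₂ : ∀ ξ θ, P ξ θ = ν ξ * μ θ * Real.exp (-a₂ ξ - b₂ θ - c ξ θ))
    (hPν : ∀ ξ, ∑ θ, P ξ θ = ν ξ) (hPμ : ∀ θ, ∑ ξ, P ξ θ = μ θ) :
    ∃ k : ℝ, (∀ ξ, a₂ ξ = a₁ ξ + k) ∧ (∀ θ, b₂ θ = b₁ θ - k) :=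
  schrodinger_potentials_unique_up_to_translation_general ν hν0 μ hμ0 c a₁ a₂ b₁ b₂ P hP₁ hP₂
end

section
/- Let X, Θ be finite sets, φ, ν fully supported on X, μ fully supported on Θ, α ∈ (0,1), u : X × Θ → ℝ. If P maximizes U(P) = E_P[u] − α D_KL(P|_ξ∥φ) − I_P(ξ,θ) subject to P|_ξ = ν, P|_θ = μ, with Schrödinger potentials a, b (so P(ξ,θ) = φ(ξ)^α ν(ξ)^{1−α} μ(θ) e^{u−a−b}), then the optimal value is additively separable: U(P) = Σ_ξ ν(ξ) a(ξ) + Σ_θ μ(θ) b(θ). -/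
open Finset Real

variable {X Θ : Type*} [Fintype X] [Fintype Θ]

/-! The objective is the `P`-expectation of the integrand `Yfun`. Taking logarithms in the Gibbs
form of `P` shows that `Yfun` equals `a ξ + b θ` pointwise, so its expectation splits into the
marginal expectations `∑ ν a + ∑ μ b`. -/

lemma Uobj_eq_sum_mul_Yfun (α : ℝ) (u : X → Θ → ℝ) (φ : X → ℝ) (μ : Θ → ℝ)
    (P : X → Θ → ℝ) :
    Uobj α u φ μ P = ∑ ξ, ∑ θ, P ξ θ * Yfun α u φ μ P ξ θ := by
  have hKL : α * ∑ ξ, margX P ξ * log (margX P ξ / φ ξ)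
      = ∑ ξ, ∑ θ, α * (P ξ θ * log (margX P ξ / φ ξ)) := by
    simp only [margX, Finset.sum_mul, Finset.mul_sum]
  simp only [Uobj, Yfun, hKL, ← Finset.sum_sub_distrib]
  exact Finset.sum_congr rfl fun ξ _ => Finset.sum_congr rfl fun θ _ => by ring

lemma log_mul_rpow_mul_rpow_mul_exp {x y z : ℝ} (hx : 0 < x) (hy : 0 < y) (hz : 0 < z)
    (s t v : ℝ) :
    log (x ^ s * y ^ t * z * exp v) = s * log x + t * log y + log z + v := by
  have hxs := rpow_pos_of_pos hx s
  have hyt := rpow_pos_of_pos hy t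
  rw [log_mul (by positivity) (exp_ne_zero v), log_mul (by positivity) hz.ne',
    log_mul hxs.ne' hyt.ne', log_rpow hx, log_rpow hy, log_exp]

lemma sub_log_sub_log_eq_of_eq_gibbs {α f n m p v w c : ℝ} (hf : 0 < f) (hn : 0 < n)
    (hm : 0 < m) (hp : p = f ^ α * n ^ (1 - α) * m * exp (v - w - c)) :
    v - α * log (n / f) - log (p / m / n) = w + c := by
  have hp_pos : 0 < p := by rw [hp]; positivity
  have hlog_p := log_mul_rpow_mul_rpow_mul_exp hf hn hm α (1 - α) (v - w - c)
  rw [← hp] at hlog_p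
  rw [log_div (by positivity) hn.ne', log_div hp_pos.ne' hm.ne', log_div hn.ne' hf.ne', hlog_p]
  ring

lemma sum_sum_mul_add_of_marginals {P : X → Θ → ℝ} {ν : X → ℝ} {μ : Θ → ℝ}
    (hPν : ∀ ξ, ∑ θ, P ξ θ = ν ξ) (hPμ : ∀ θ, ∑ ξ, P ξ θ = μ θ) (a : X → ℝ) (b : Θ → ℝ) :
    ∑ ξ, ∑ θ, P ξ θ * (a ξ + b θ) = (∑ ξ, ν ξ * a ξ) + ∑ θ, μ θ * b θ := by
  simp only [mul_add, Finset.sum_add_distrib]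
  rw [Finset.sum_comm (f := fun ξ θ => P ξ θ * b θ)]
  simp only [← Finset.sum_mul, hPν, hPμ]

theorem optimal_value_additively_separable_general
    (α : ℝ)
    (u : X → Θ → ℝ)
    (φ : X → ℝ) (hφ0 : ∀ ξ, 0 < φ ξ)
    (ν : X → ℝ) (hν0 : ∀ ξ, 0 < ν ξ)
    (μ : Θ → ℝ) (hμ0 : ∀ θ, 0 < μ θ)
    (a : X → ℝ) (b : Θ → ℝ)
    (P : X → Θ → ℝ)
    (hP : ∀ ξ θ, P ξ θ =
      φ ξ ^ α * ν ξ ^ (1 - α) * μ θ * Real.exp (u ξ θ - a ξ - b θ))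
    (hPν : ∀ ξ, ∑ θ, P ξ θ = ν ξ) (hPμ : ∀ θ, ∑ ξ, P ξ θ = μ θ) :
    Uobj α u φ μ P = (∑ ξ, ν ξ * a ξ) + ∑ θ, μ θ * b θ := by
  have hY : ∀ ξ θ, Yfun α u φ μ P ξ θ = a ξ + b θ := fun ξ θ => by
    rw [Yfun, ccp, margX, hPν]
    exact sub_log_sub_log_eq_of_eq_gibbs (hφ0 ξ) (hν0 ξ) (hμ0 θ) (hP ξ θ)
  rw [Uobj_eq_sum_mul_Yfun]
  simp only [hY]
  exact sum_sum_mul_add_of_marginals hPν hPμ a b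

theorem optimal_value_additively_separable
    (α : ℝ) (hα : 0 < α) (hα1 : α < 1)
    (u : X → Θ → ℝ)
    (φ : X → ℝ) (hφ0 : ∀ ξ, 0 < φ ξ) (hφ1 : ∑ ξ, φ ξ = 1)
    (ν : X → ℝ) (hν0 : ∀ ξ, 0 < ν ξ) (hν1 : ∑ ξ, ν ξ = 1)
    (μ : Θ → ℝ) (hμ0 : ∀ θ, 0 < μ θ) (hμ1 : ∑ θ, μ θ = 1)
    (a : X → ℝ) (b : Θ → ℝ)
    (P : X → Θ → ℝ)
    (hP : ∀ ξ θ, P ξ θ =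
      φ ξ ^ α * ν ξ ^ (1 - α) * μ θ * Real.exp (u ξ θ - a ξ - b θ))
    (hPν : ∀ ξ, ∑ θ, P ξ θ = ν ξ) (hPμ : ∀ θ, ∑ ξ, P ξ θ = μ θ)
    (hmax : ∀ Q : X → Θ → ℝ, (∀ ξ θ, 0 ≤ Q ξ θ) →
      (∀ ξ, ∑ θ, Q ξ θ = ν ξ) → (∀ θ, ∑ ξ, Q ξ θ = μ θ) →
      Uobj α u φ μ Q ≤ Uobj α u φ μ P) :
    Uobj α u φ μ P = (∑ ξ, ν ξ * a ξ) + ∑ θ, μ θ * b θ :=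
  optimal_value_additively_separable_general α u φ hφ0 ν hν0 μ hμ0 a b P hP hPν hPμ
end

section
/- Let X, Θ be finite sets, μ fully supported on Θ, and let P, H be joint probabilities on X × Θ with P|_θ = H|_θ = μ, both having full support. Define P_ε = (1−ε)P + εH and U(Q) = Σ_{ξ,θ} Q(ξ,θ) Y(ξ,θ;Q) where Y(ξ,θ;Q) = u(ξ,θ) − α log(Q(ξ)/φ(ξ)) − log(Q(ξ|θ)/Q(ξ)), for fixed α ∈ (0,1), fully supported φ on X, and u : X × Θ → ℝ. Then for t ∈ [0,1), the right derivative d/dε|_{ε=t⁺} U(P_ε) = Σ_{ξ,θ}(H(ξ,θ) − P(ξ,θ)) Y(ξ,θ;P_t). -/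
open Finset Real

variable {X Θ : Type*} [Fintype X] [Fintype Θ]

theorem first_step_orthogonality_II
    (α : ℝ) (hα : 0 < α) (hα1 : α < 1)
    (u : X → Θ → ℝ)
    (φ : X → ℝ) (hφ0 : ∀ ξ, 0 < φ ξ) (hφ1 : ∑ ξ, φ ξ = 1)
    (μ : Θ → ℝ) (hμ0 : ∀ θ, 0 < μ θ) (hμ1 : ∑ θ, μ θ = 1)
    (P H : X → Θ → ℝ)
    (hPpos : ∀ ξ θ, 0 < P ξ θ) (hPθ : ∀ θ, ∑ ξ, P ξ θ = μ θ)
    (hHpos : ∀ ξ θ, 0 < H ξ θ) (hHθ : ∀ θ, ∑ ξ, H ξ θ = μ θ)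
    (t : ℝ) (ht0 : 0 ≤ t) (ht1 : t < 1) :
    HasDerivWithinAt
      (fun ε : ℝ => Uobj α u φ μ (fun ξ θ => (1 - ε) * P ξ θ + ε * H ξ θ))
      (∑ ξ, ∑ θ, (H ξ θ - P ξ θ) *
        Yfun α u φ μ (fun ξ' θ' => (1 - t) * P ξ' θ' + t * H ξ' θ') ξ θ)
      (Set.Ici t) t := by
  classical
  have hΘne : (Finset.univ : Finset Θ).Nonempty := by
    rcases (Finset.univ : Finset Θ).eq_empty_or_nonempty with h | h
    · rw [h] at hμ1; simp at hμ1
    · exact h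
  set a : X → ℝ := margX P with ha
  set b : X → ℝ := margX H with hb
  have hapos : ∀ ξ, 0 < a ξ := fun ξ => Finset.sum_pos (fun θ _ => hPpos ξ θ) hΘne
  have hbpos : ∀ ξ, 0 < b ξ := fun ξ => Finset.sum_pos (fun θ _ => hHpos ξ θ) hΘne
  set Pe : ℝ → X → Θ → ℝ := fun ε ξ θ => (1 - ε) * P ξ θ + ε * H ξ θ with hPedef
  set M : ℝ → X → ℝ := fun ε ξ => (1 - ε) * a ξ + ε * b ξ with hMdef
  have hmarg : ∀ ε ξ, margX (Pe ε) ξ = M ε ξ := by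
    intro ε ξ
    simp only [hPedef, hMdef, ha, hb, margX, Finset.sum_add_distrib, Finset.mul_sum]
  have hsumPe : ∀ ε ξ, ∑ θ, Pe ε ξ θ = M ε ξ := fun ε ξ => hmarg ε ξ
  -- the open set where everything is positive
  set S : Set ℝ := {ε | ∀ ξ θ, 0 < Pe ε ξ θ} with hSdef
  have hSopen : IsOpen S := by
    have hS : S = ⋂ ξ, ⋂ θ, {ε | 0 < Pe ε ξ θ} := by
      ext ε; simp [hSdef, Set.mem_iInter]
    rw [hS]
    refine isOpen_iInter_of_finite fun ξ => isOpen_iInter_of_finite fun θ => ?_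
    exact isOpen_lt continuous_const (by simp only [hPedef]; fun_prop)
  have htS : t ∈ S := by
    intro ξ θ
    have h1 : 0 < (1 - t) * P ξ θ := mul_pos (by linarith) (hPpos ξ θ)
    have h2 : 0 ≤ t * H ξ θ := mul_nonneg ht0 (hHpos ξ θ).le
    simp only [hPedef]; linarith
  have hMS : ∀ ε ∈ S, ∀ ξ, 0 < M ε ξ := by
    intro ε hε ξ
    rw [← hsumPe ε ξ]
    exact Finset.sum_pos (fun θ _ => hε ξ θ) hΘne
  have hPet : ∀ ξ θ, 0 < Pe t ξ θ := htS
  have hMt : ∀ ξ, 0 < M t ξ := hMS t htS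
  -- the smooth version G of the objective
  set G : ℝ → ℝ := fun ε =>
    (∑ ξ, ∑ θ, Pe ε ξ θ * u ξ θ)
      - α * ∑ ξ, (M ε ξ * Real.log (M ε ξ) - M ε ξ * Real.log (φ ξ))
      - ∑ ξ, ∑ θ, (Pe ε ξ θ * Real.log (Pe ε ξ θ) - Pe ε ξ θ * Real.log (μ θ)
          - Pe ε ξ θ * Real.log (M ε ξ)) with hGdef
  have hFG : ∀ ε ∈ S, Uobj α u φ μ (Pe ε) = G ε := by
    intro ε hε
    have hMpos := hMS ε hε
    rw [hGdef]
    unfold Uobj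
    congr 1
    · congr 1
      refine congrArg (α * ·) (Finset.sum_congr rfl fun ξ _ => ?_)
      rw [hmarg ε ξ, Real.log_div (hMpos ξ).ne' (hφ0 ξ).ne', mul_sub]
    · refine Finset.sum_congr rfl fun ξ _ => Finset.sum_congr rfl fun θ _ => ?_
      have hlog : Real.log (ccp (Pe ε) μ ξ θ / margX (Pe ε) ξ)
          = Real.log (Pe ε ξ θ) - Real.log (μ θ) - Real.log (M ε ξ) := by
        rw [hmarg ε ξ]
        unfold ccp
        rw [div_div, Real.log_div (hε ξ θ).ne' (mul_pos (hμ0 θ) (hMpos ξ)).ne',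
          Real.log_mul (hμ0 θ).ne' (hMpos ξ).ne']
        ring
      rw [hlog]; ring
  -- derivatives of the building blocks
  have hPe' : ∀ ξ θ, HasDerivAt (fun ε => Pe ε ξ θ) (H ξ θ - P ξ θ) t := by
    intro ξ θ
    have h : HasDerivAt (fun ε : ℝ => (1 - ε) * P ξ θ + ε * H ξ θ)
        ((0 - 1) * P ξ θ + 1 * H ξ θ) t :=
      (((hasDerivAt_const t (1 : ℝ)).sub (hasDerivAt_id t)).mul_const _).add
        ((hasDerivAt_id t).mul_const _)
    simp only [hPedef]
    convert h using 1; ring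
  have hM' : ∀ ξ, HasDerivAt (fun ε => M ε ξ) (b ξ - a ξ) t := by
    intro ξ
    have h : HasDerivAt (fun ε : ℝ => (1 - ε) * a ξ + ε * b ξ)
        ((0 - 1) * a ξ + 1 * b ξ) t :=
      (((hasDerivAt_const t (1 : ℝ)).sub (hasDerivAt_id t)).mul_const _).add
        ((hasDerivAt_id t).mul_const _)
    simp only [hMdef]
    convert h using 1; ring
  have hA : HasDerivAt (fun ε => ∑ ξ, ∑ θ, Pe ε ξ θ * u ξ θ)
      (∑ ξ, ∑ θ, (H ξ θ - P ξ θ) * u ξ θ) t :=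
    HasDerivAt.fun_sum fun ξ _ => HasDerivAt.fun_sum fun θ _ => (hPe' ξ θ).mul_const _
  have hB : HasDerivAt (fun ε => ∑ ξ, (M ε ξ * Real.log (M ε ξ) - M ε ξ * Real.log (φ ξ)))
      (∑ ξ, ((Real.log (M t ξ) + 1) * (b ξ - a ξ) - (b ξ - a ξ) * Real.log (φ ξ))) t :=
    HasDerivAt.fun_sum fun ξ _ =>
      ((Real.hasDerivAt_mul_log (hMt ξ).ne').comp t (hM' ξ)).fun_sub ((hM' ξ).mul_const _)
  have hC : HasDerivAt (fun ε => ∑ ξ, ∑ θ,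
        (Pe ε ξ θ * Real.log (Pe ε ξ θ) - Pe ε ξ θ * Real.log (μ θ)
          - Pe ε ξ θ * Real.log (M ε ξ)))
      (∑ ξ, ∑ θ, ((Real.log (Pe t ξ θ) + 1) * (H ξ θ - P ξ θ)
          - (H ξ θ - P ξ θ) * Real.log (μ θ)
          - ((H ξ θ - P ξ θ) * Real.log (M t ξ)
              + Pe t ξ θ * ((M t ξ)⁻¹ * (b ξ - a ξ))))) t :=
    HasDerivAt.fun_sum fun ξ _ => HasDerivAt.fun_sum fun θ _ =>
      (((Real.hasDerivAt_mul_log (hPet ξ θ).ne').comp t (hPe' ξ θ)).fun_sub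
        ((hPe' ξ θ).mul_const _)).fun_sub
        ((hPe' ξ θ).fun_mul ((Real.hasDerivAt_log (hMt ξ).ne').comp t (hM' ξ)))
  have hG : HasDerivAt G
      ((∑ ξ, ∑ θ, (H ξ θ - P ξ θ) * u ξ θ)
        - α * (∑ ξ, ((Real.log (M t ξ) + 1) * (b ξ - a ξ) - (b ξ - a ξ) * Real.log (φ ξ)))
        - ∑ ξ, ∑ θ, ((Real.log (Pe t ξ θ) + 1) * (H ξ θ - P ξ θ)
            - (H ξ θ - P ξ θ) * Real.log (μ θ)
            - ((H ξ θ - P ξ θ) * Real.log (M t ξ)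
                + Pe t ξ θ * ((M t ξ)⁻¹ * (b ξ - a ξ))))) t := by
    rw [hGdef]
    exact (hA.sub (hB.const_mul α)).sub hC
  -- zero-sum facts
  have hsum_a : ∑ ξ, a ξ = 1 := by
    rw [ha]
    unfold margX
    rw [Finset.sum_comm]
    simp only [hPθ]
    exact hμ1
  have hsum_b : ∑ ξ, b ξ = 1 := by
    rw [hb]
    unfold margX
    rw [Finset.sum_comm]
    simp only [hHθ]
    exact hμ1
  have hZ : ∑ ξ, (b ξ - a ξ) = 0 := by
    rw [Finset.sum_sub_distrib, hsum_a, hsum_b]; ring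
  have hs1 : ∀ ξ, ∑ θ, (H ξ θ - P ξ θ) = b ξ - a ξ := by
    intro ξ
    rw [Finset.sum_sub_distrib]
    simp [ha, hb, margX]
  -- identify the derivative with the target
  have hY : ∀ ξ θ, Yfun α u φ μ (Pe t) ξ θ
      = u ξ θ - α * (Real.log (M t ξ) - Real.log (φ ξ))
        - (Real.log (Pe t ξ θ) - Real.log (μ θ) - Real.log (M t ξ)) := by
    intro ξ θ
    unfold Yfun
    rw [hmarg t ξ, Real.log_div (hMt ξ).ne' (hφ0 ξ).ne']
    congr 1
    unfold ccp
    rw [div_div, Real.log_div (hPet ξ θ).ne' (mul_pos (hμ0 θ) (hMt ξ)).ne',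
      Real.log_mul (hμ0 θ).ne' (hMt ξ).ne']
    ring
  have hB_eq : (∑ ξ, ((Real.log (M t ξ) + 1) * (b ξ - a ξ) - (b ξ - a ξ) * Real.log (φ ξ)))
      = ∑ ξ, (b ξ - a ξ) * (Real.log (M t ξ) - Real.log (φ ξ)) := by
    have : ∀ ξ, (Real.log (M t ξ) + 1) * (b ξ - a ξ) - (b ξ - a ξ) * Real.log (φ ξ)
        = (b ξ - a ξ) * (Real.log (M t ξ) - Real.log (φ ξ)) + (b ξ - a ξ) := by
      intro ξ; ring
    rw [Finset.sum_congr rfl fun ξ _ => this ξ, Finset.sum_add_distrib, hZ, add_zero]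
  have hC_eq : ∀ ξ, (∑ θ, ((Real.log (Pe t ξ θ) + 1) * (H ξ θ - P ξ θ)
          - (H ξ θ - P ξ θ) * Real.log (μ θ)
          - ((H ξ θ - P ξ θ) * Real.log (M t ξ)
              + Pe t ξ θ * ((M t ξ)⁻¹ * (b ξ - a ξ)))))
      = ∑ θ, (H ξ θ - P ξ θ) *
          (Real.log (Pe t ξ θ) - Real.log (μ θ) - Real.log (M t ξ)) := by
    intro ξ
    have hpt : ∀ θ, (Real.log (Pe t ξ θ) + 1) * (H ξ θ - P ξ θ)
          - (H ξ θ - P ξ θ) * Real.log (μ θ)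
          - ((H ξ θ - P ξ θ) * Real.log (M t ξ)
              + Pe t ξ θ * ((M t ξ)⁻¹ * (b ξ - a ξ)))
        = (H ξ θ - P ξ θ) * (Real.log (Pe t ξ θ) - Real.log (μ θ) - Real.log (M t ξ))
            + (H ξ θ - P ξ θ) - Pe t ξ θ * ((M t ξ)⁻¹ * (b ξ - a ξ)) := by
      intro θ; ring
    rw [Finset.sum_congr rfl fun θ _ => hpt θ]
    rw [Finset.sum_sub_distrib, Finset.sum_add_distrib, hs1 ξ]
    have hPeM : ∑ θ, Pe t ξ θ * ((M t ξ)⁻¹ * (b ξ - a ξ)) = b ξ - a ξ := by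
      rw [← Finset.sum_mul, hsumPe t ξ, ← mul_assoc, mul_inv_cancel₀ (hMt ξ).ne', one_mul]
    rw [hPeM]
    ring
  have hT_eq : (∑ ξ, ∑ θ, (H ξ θ - P ξ θ) * Yfun α u φ μ (Pe t) ξ θ)
      = (∑ ξ, ∑ θ, (H ξ θ - P ξ θ) * u ξ θ)
        - α * (∑ ξ, (b ξ - a ξ) * (Real.log (M t ξ) - Real.log (φ ξ)))
        - ∑ ξ, ∑ θ, (H ξ θ - P ξ θ) *
            (Real.log (Pe t ξ θ) - Real.log (μ θ) - Real.log (M t ξ)) := by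
    have hpt : ∀ ξ θ, (H ξ θ - P ξ θ) * Yfun α u φ μ (Pe t) ξ θ
        = (H ξ θ - P ξ θ) * u ξ θ
          - α * ((H ξ θ - P ξ θ) * (Real.log (M t ξ) - Real.log (φ ξ)))
          - (H ξ θ - P ξ θ) *
              (Real.log (Pe t ξ θ) - Real.log (μ θ) - Real.log (M t ξ)) := by
      intro ξ θ; rw [hY ξ θ]; ring
    rw [Finset.sum_congr rfl fun ξ _ => Finset.sum_congr rfl fun θ _ => hpt ξ θ]
    simp only [Finset.sum_sub_distrib, ← Finset.mul_sum]
    have h2 : (∑ ξ, ∑ θ, (H ξ θ - P ξ θ) * (Real.log (M t ξ) - Real.log (φ ξ)))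
        = ∑ ξ, (b ξ - a ξ) * (Real.log (M t ξ) - Real.log (φ ξ)) :=
      Finset.sum_congr rfl fun ξ _ => by rw [← Finset.sum_mul, hs1 ξ]
    rw [h2]
  -- put everything together
  have hG' : HasDerivAt G (∑ ξ, ∑ θ, (H ξ θ - P ξ θ) * Yfun α u φ μ (Pe t) ξ θ) t := by
    rw [hT_eq, ← hB_eq]
    convert hG using 2
    exact (Finset.sum_congr rfl fun ξ _ => (hC_eq ξ).symm)
  have hF : HasDerivAt (fun ε => Uobj α u φ μ (Pe ε))
      (∑ ξ, ∑ θ, (H ξ θ - P ξ θ) * Yfun α u φ μ (Pe t) ξ θ) t := by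
    refine hG'.congr_of_eventuallyEq ?_
    filter_upwards [hSopen.mem_nhds htS] with ε hε
    exact hFG ε hε
  exact hF.hasDerivWithinAt
end

section
/- Let X, Θ be finite sets, φ, μ fully supported, α ∈ (0,1), u bounded, and let P be the maximizer of the state-characteristic objective with conditional choice probabilities P(ξ|θ) = φ(ξ)^α P(ξ)^{1−α} e^{u(ξ,θ)}/Z(θ; P|_ξ), and P' the maximizer after the prior changes from φ to another fully supported φ' (with marginal P' and partition function Z'). Then for any ξ₁, ξ₂ ∈ X, the double ratio [P(ξ₁|θ)/P'(ξ₁|θ)] · [P'(ξ₂|θ)/P(ξ₂|θ)] is independent of θ, and equals [φ(ξ₁)^α P(ξ₁)^{1−α} / (φ'(ξ₁)^α P'(ξ₁)^{1−α})] · [φ'(ξ₂)^α P'(ξ₂)^{1−α} / (φ(ξ₂)^α P(ξ₂)^{1−α})]. -/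
open Finset Real

variable {X Θ : Type*} [Fintype X] [Fintype Θ]

/-- Partition function `Z(θ;ν) = Σ_ξ φ(ξ)^α ν(ξ)^{1−α} e^{u(ξ,θ)}`. -/
noncomputable def Zpart (α : ℝ) (u : X → Θ → ℝ) (φ ν : X → ℝ) (θ : Θ) : ℝ :=
  ∑ ξ, φ ξ ^ α * ν ξ ^ (1 - α) * Real.exp (u ξ θ)

theorem double_ratio_state_independent
    (α : ℝ) (hα : 0 < α) (hα1 : α < 1)
    (u : X → Θ → ℝ)
    (φ φ' : X → ℝ) (hφ0 : ∀ ξ, 0 < φ ξ) (hφ1 : ∑ ξ, φ ξ = 1)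
    (hφ0' : ∀ ξ, 0 < φ' ξ) (hφ1' : ∑ ξ, φ' ξ = 1)
    (μ : Θ → ℝ) (hμ0 : ∀ θ, 0 < μ θ) (hμ1 : ∑ θ, μ θ = 1)
    (P P' : X → Θ → ℝ)
    (hPpos : ∀ ξ, 0 < margX P ξ) (hPpos' : ∀ ξ, 0 < margX P' ξ)
    (hMNL : ∀ ξ θ, ccp P μ ξ θ =
      φ ξ ^ α * margX P ξ ^ (1 - α) * Real.exp (u ξ θ) / Zpart α u φ (margX P) θ)
    (hMNL' : ∀ ξ θ, ccp P' μ ξ θ =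
      φ' ξ ^ α * margX P' ξ ^ (1 - α) * Real.exp (u ξ θ) / Zpart α u φ' (margX P') θ) :
    ∀ θ (ξ₁ ξ₂ : X),
      (ccp P μ ξ₁ θ / ccp P' μ ξ₁ θ) * (ccp P' μ ξ₂ θ / ccp P μ ξ₂ θ)
        = (φ ξ₁ ^ α * margX P ξ₁ ^ (1 - α) / (φ' ξ₁ ^ α * margX P' ξ₁ ^ (1 - α)))
            * (φ' ξ₂ ^ α * margX P' ξ₂ ^ (1 - α)
                / (φ ξ₂ ^ α * margX P ξ₂ ^ (1 - α))) := by
  intro θ ξ₁ ξ₂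
  have hne : (Finset.univ : Finset X).Nonempty := ⟨ξ₁, Finset.mem_univ _⟩
  have hterm : ∀ (ψ : X → ℝ) (ν : X → ℝ), (∀ ξ, 0 < ψ ξ) → (∀ ξ, 0 < ν ξ) →
      ∀ ξ, 0 < ψ ξ ^ α * ν ξ ^ (1 - α) * Real.exp (u ξ θ) := by
    intro ψ ν hψ hν ξ
    have := hψ ξ; have := hν ξ
    positivity
  have hZ : 0 < Zpart α u φ (margX P) θ :=
    Finset.sum_pos (fun ξ _ => hterm φ (margX P) hφ0 hPpos ξ) hne
  have hZ' : 0 < Zpart α u φ' (margX P') θ :=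
    Finset.sum_pos (fun ξ _ => hterm φ' (margX P') hφ0' hPpos' ξ) hne
  rw [hMNL, hMNL, hMNL', hMNL']
  have a1 := hφ0 ξ₁; have a2 := hφ0 ξ₂; have b1 := hφ0' ξ₁; have b2 := hφ0' ξ₂
  have c1 := hPpos ξ₁; have c2 := hPpos ξ₂; have d1 := hPpos' ξ₁; have d2 := hPpos' ξ₂
  have e1 := (Real.exp_pos (u ξ₁ θ)).ne'
  have e2 := (Real.exp_pos (u ξ₂ θ)).ne'
  have p1 : (0:ℝ) < φ ξ₁ ^ α * margX P ξ₁ ^ (1 - α) := by positivity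
  have p2 : (0:ℝ) < φ ξ₂ ^ α * margX P ξ₂ ^ (1 - α) := by positivity
  have q1 : (0:ℝ) < φ' ξ₁ ^ α * margX P' ξ₁ ^ (1 - α) := by positivity
  have q2 : (0:ℝ) < φ' ξ₂ ^ α * margX P' ξ₂ ^ (1 - α) := by positivity
  field_simp
end
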